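/- arXiv:2407.17159 — 8 statements merged into one kernel-verified Lean document; each statement's English description precedes it below -/
import Mathlib

section
/- Let X be a real Hilbert space, V a closed subspace of X, and P : X → X the orthogonal projection onto V. Fix T > 0, a positive integer M, τ = T/M and t_n = nτ. Let u : ℝ → X be continuously differentiable on [0,T] and set S = (τ Σ_{n=0}^M ‖u(t_n) − P u(t_n)‖²)^{1/2}. Then for every 0 ≤ n ≤ M one has ‖u(t_n) − P u(t_n)‖ ≤ √2 · c_A · S^{1/2} · (∫_0^T ‖u'(t) − P u'(t)‖² dt)^{1/4} + S/√T. Moreover, if Σ_{n=0}^M (u(t_n) − P u(t_n)) = 0, the term S/√T can be omitted. -/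
/-!
With `e n` the projection error of the `n`-th snapshot, `‖e n‖² - ‖e m‖²` telescopes into
`∑ ‖e (k+1) - e k‖ (‖e (k+1)‖ + ‖e k‖)`, which Cauchy–Schwarz bounds by
`2 (∑ ‖e (k+1) - e k‖²)^{1/2} (∑ ‖e m‖²)^{1/2}`. Each increment is the integral of `(I - P) u'`
over one time step, so `∑ ‖e (k+1) - e k‖² ≤ τ ∫₀ᵀ ‖(I - P) u'‖²`. Averaging over `m` leaves
the mean square `S² / T`. If the `e m` have zero mean, compare `e n` with `e n - e m` instead:
`∑ₘ ‖e n - e m‖² = (M + 1) ‖e n‖² + ∑ₘ ‖e m‖²`, and the same telescoping bound applied to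
`e - e m` removes the mean-square term.
-/

noncomputable def cA : ℝ := Real.sqrt (2 + Real.sqrt 2 / 2)

open MeasureTheory Set Finset

section Discrete

variable {E : Type*}

theorem abs_norm_sq_sub_norm_sq_le [SeminormedAddCommGroup E] (a b : E) :
    |‖a‖ ^ 2 - ‖b‖ ^ 2| ≤ ‖a - b‖ * (‖a‖ + ‖b‖) := by
  rw [sq_sub_sq, abs_mul, abs_of_nonneg (by positivity : 0 ≤ ‖a‖ + ‖b‖), mul_comm]
  exact mul_le_mul_of_nonneg_right (abs_norm_sub_norm_le a b) (by positivity)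

theorem abs_sub_le_sum_range_abs_sub (a : ℕ → ℝ) {M n m : ℕ} (hn : n ≤ M) (hm : m ≤ M) :
    |a n - a m| ≤ ∑ k ∈ range M, |a (k + 1) - a k| := by
  have key : ∀ {p q : ℕ}, p ≤ q → q ≤ M →
      dist (a p) (a q) ≤ ∑ k ∈ range M, |a (k + 1) - a k| :=
    fun hpq hq => (dist_le_Ico_sum_dist a hpq).trans <| by
      simp only [dist_comm (a _) (a (_ + 1)), Real.dist_eq]
      refine sum_le_sum_of_subset_of_nonneg ?_ fun _ _ _ => abs_nonneg _
      rw [range_eq_Ico]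
      exact Ico_subset_Ico (Nat.zero_le _) hq
  rcases le_total m n with h | h
  · simpa only [Real.dist_eq, abs_sub_comm] using key h hn
  · simpa only [Real.dist_eq] using key h hm

theorem norm_sq_le_norm_sq_add_sum [SeminormedAddCommGroup E] (f : ℕ → E) {M n m : ℕ}
    (hn : n ≤ M) (hm : m ≤ M) :
    ‖f n‖ ^ 2 ≤ ‖f m‖ ^ 2 + ∑ k ∈ range M, ‖f (k + 1) - f k‖ * (‖f (k + 1)‖ + ‖f k‖) := by
  have h := (le_abs_self _).trans (abs_sub_le_sum_range_abs_sub (fun k => ‖f k‖ ^ 2) hn hm)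
  have := sum_le_sum fun k (_ : k ∈ range M) => abs_norm_sq_sub_norm_sq_le (f (k + 1)) (f k)
  linarith

theorem norm_sq_le_mean_add_sum [SeminormedAddCommGroup E] (f : ℕ → E) {M n : ℕ} (hn : n ≤ M) :
    ‖f n‖ ^ 2 ≤ (∑ m ∈ range (M + 1), ‖f m‖ ^ 2) / (M + 1) +
      ∑ k ∈ range M, ‖f (k + 1) - f k‖ * (‖f (k + 1)‖ + ‖f k‖) := by
  rw [← sub_le_iff_le_add, le_div_iff₀ (by positivity)]
  have := sum_le_sum fun m (hm : m ∈ range (M + 1)) =>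
    norm_sq_le_norm_sq_add_sum f hn (Nat.lt_succ_iff.1 (mem_range.1 hm))
  simp only [sum_add_distrib, sum_const, card_range, nsmul_eq_mul] at this
  push_cast at this
  linarith

theorem sum_norm_sub_mul_le [SeminormedAddCommGroup E] (f : ℕ → E) (M : ℕ) :
    ∑ k ∈ range M, ‖f (k + 1) - f k‖ * (‖f (k + 1)‖ + ‖f k‖) ≤
      2 * √(∑ k ∈ range M, ‖f (k + 1) - f k‖ ^ 2) * √(∑ m ∈ range (M + 1), ‖f m‖ ^ 2) := by
  have hsq : ∑ k ∈ range M, (‖f (k + 1)‖ + ‖f k‖) ^ 2 ≤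
      2 ^ 2 * ∑ m ∈ range (M + 1), ‖f m‖ ^ 2 := by
    have hsucc : ∑ k ∈ range M, ‖f (k + 1)‖ ^ 2 ≤ ∑ m ∈ range (M + 1), ‖f m‖ ^ 2 := by
      rw [sum_range_succ' (fun m => ‖f m‖ ^ 2)]
      exact le_add_of_nonneg_right (sq_nonneg _)
    have hself : ∑ k ∈ range M, ‖f k‖ ^ 2 ≤ ∑ m ∈ range (M + 1), ‖f m‖ ^ 2 := by
      rw [sum_range_succ]
      exact le_add_of_nonneg_right (sq_nonneg _)
    calc ∑ k ∈ range M, (‖f (k + 1)‖ + ‖f k‖) ^ 2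
        ≤ ∑ k ∈ range M, (2 * ‖f (k + 1)‖ ^ 2 + 2 * ‖f k‖ ^ 2) :=
          sum_le_sum fun k _ => by nlinarith [sq_nonneg (‖f (k + 1)‖ - ‖f k‖)]
      _ ≤ 2 ^ 2 * ∑ m ∈ range (M + 1), ‖f m‖ ^ 2 := by
          rw [sum_add_distrib, ← mul_sum, ← mul_sum]
          linarith
  calc _ ≤ √(∑ k ∈ range M, ‖f (k + 1) - f k‖ ^ 2) *
          √(∑ k ∈ range M, (‖f (k + 1)‖ + ‖f k‖) ^ 2) :=
        Real.sum_mul_le_sqrt_mul_sqrt _ _ _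
    _ ≤ √(∑ k ∈ range M, ‖f (k + 1) - f k‖ ^ 2) *
          √(2 ^ 2 * ∑ m ∈ range (M + 1), ‖f m‖ ^ 2) := by
        gcongr
    _ = _ := by rw [Real.sqrt_mul (by positivity), Real.sqrt_sq zero_le_two]; ring

theorem norm_sub_sq_le_sum_add [SeminormedAddCommGroup E] (f : ℕ → E) {M n m : ℕ}
    (hn : n ≤ M) (hm : m ≤ M) :
    ‖f n - f m‖ ^ 2 ≤ ∑ k ∈ range M, ‖f (k + 1) - f k‖ * (‖f (k + 1)‖ + ‖f k‖) +
      2 * ‖f m‖ * ∑ k ∈ range M, ‖f (k + 1) - f k‖ := by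
  have h := norm_sq_le_norm_sq_add_sum (fun k => f k - f m) hn hm
  simp only [sub_self, norm_zero, sub_sub_sub_cancel_right] at h
  rw [zero_pow two_ne_zero, zero_add] at h
  refine h.trans ?_
  rw [mul_sum, ← sum_add_distrib]
  refine sum_le_sum fun k _ => ?_
  have h₁ := norm_sub_le (f (k + 1)) (f m)
  have h₂ := norm_sub_le (f k) (f m)
  have := norm_nonneg (f (k + 1) - f k)
  nlinarith

theorem norm_sq_le_of_sum_eq_zero [NormedAddCommGroup E] [InnerProductSpace ℝ E] (f : ℕ → E)
    {M n : ℕ} (hf : ∑ m ∈ range (M + 1), f m = 0) (hn : n ≤ M) :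
    ‖f n‖ ^ 2 ≤
      4 * √(∑ k ∈ range M, ‖f (k + 1) - f k‖ ^ 2) * √(∑ m ∈ range (M + 1), ‖f m‖ ^ 2) := by
  set A := ∑ m ∈ range (M + 1), ‖f m‖ ^ 2
  set B := ∑ k ∈ range M, ‖f (k + 1) - f k‖ ^ 2
  have hD : ∑ k ∈ range M, ‖f (k + 1) - f k‖ * (‖f (k + 1)‖ + ‖f k‖) ≤ 2 * √B * √A :=
    sum_norm_sub_mul_le f M
  have hexpand : ∑ m ∈ range (M + 1), ‖f n - f m‖ ^ 2 = (M + 1) * ‖f n‖ ^ 2 + A := by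
    simp only [norm_sub_sq_real, sum_add_distrib, sum_sub_distrib, ← mul_sum, ← inner_sum, hf,
      inner_zero_right, sum_const, card_range, nsmul_eq_mul, A]
    push_cast
    ring
  have hK : ∑ k ∈ range M, ‖f (k + 1) - f k‖ ≤ √(M + 1) * √B := by
    have := Real.sum_mul_le_sqrt_mul_sqrt (range M) (fun _ => (1 : ℝ)) fun k => ‖f (k + 1) - f k‖
    simp only [one_mul, one_pow, sum_const, card_range, nsmul_one] at this
    exact this.trans <|
      mul_le_mul_of_nonneg_right (Real.sqrt_le_sqrt (by linarith)) (Real.sqrt_nonneg _)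
  have hsum : ∑ m ∈ range (M + 1), ‖f m‖ ≤ √(M + 1) * √A := by
    have := Real.sum_mul_le_sqrt_mul_sqrt (range (M + 1)) (fun _ => (1 : ℝ)) (fun m => ‖f m‖)
    simpa only [one_mul, one_pow, sum_const, card_range, nsmul_one, Nat.cast_add_one] using this
  have hpair : (M + 1) * ‖f n‖ ^ 2 + A ≤
      (M + 1) * ∑ k ∈ range M, ‖f (k + 1) - f k‖ * (‖f (k + 1)‖ + ‖f k‖) +
        2 * ((∑ k ∈ range M, ‖f (k + 1) - f k‖) * ∑ m ∈ range (M + 1), ‖f m‖) := by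
    rw [← hexpand]
    refine (sum_le_sum fun m (hm : m ∈ range (M + 1)) =>
      norm_sub_sq_le_sum_add f hn (Nat.lt_succ_iff.1 (mem_range.1 hm))).trans_eq ?_
    rw [sum_add_distrib, sum_const, card_range, nsmul_eq_mul, ← sum_mul, ← mul_sum,
      Nat.cast_add_one]
    ring
  have hM : √((M : ℝ) + 1) * √(M + 1) = M + 1 := Real.mul_self_sqrt (by positivity)
  have hA : 0 ≤ A := by positivity
  have hprod : (∑ k ∈ range M, ‖f (k + 1) - f k‖) * ∑ m ∈ range (M + 1), ‖f m‖ ≤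
      (M + 1) * (√B * √A) := by
    calc _ ≤ (√(M + 1) * √B) * (√(M + 1) * √A) :=
          mul_le_mul hK hsum (by positivity) (by positivity)
      _ = _ := by linear_combination (√B * √A) * hM
  have hmain : (M + 1) * ‖f n‖ ^ 2 ≤ (M + 1) * (4 * √B * √A) := by
    linarith [mul_le_mul_of_nonneg_left hD (by positivity : (0 : ℝ) ≤ M + 1)]
  exact le_of_mul_le_mul_left hmain (by positivity)

end Discrete

section Calculus

theorem sq_integral_le_mul_integral_sq {h : ℝ → ℝ} {a b : ℝ} (hab : a ≤ b)
    (hh : IntervalIntegrable h volume a b)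
    (hh2 : IntervalIntegrable (fun t => h t ^ 2) volume a b) :
    (∫ t in a..b, h t) ^ 2 ≤ (b - a) * ∫ t in a..b, h t ^ 2 := by
  rcases hab.eq_or_lt with rfl | hlt
  · simp
  have hba : 0 < b - a := sub_pos.2 hlt
  set c := (∫ t in a..b, h t) / (b - a)
  -- the square deviation of `h` from its mean value `c` has nonnegative integral
  have hvar : 0 ≤ ∫ t in a..b, (h t ^ 2 - 2 * c * h t + c ^ 2) :=
    intervalIntegral.integral_nonneg hab fun t _ => by nlinarith [sq_nonneg (h t - c)]
  rw [intervalIntegral.integral_add (hh2.sub (hh.const_mul _)) intervalIntegrable_const,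
    intervalIntegral.integral_sub hh2 (hh.const_mul _), intervalIntegral.integral_const_mul,
    intervalIntegral.integral_const, smul_eq_mul] at hvar
  have hexpand :
      (b - a) * ((∫ t in a..b, h t ^ 2) - 2 * c * (∫ t in a..b, h t) + (b - a) * c ^ 2) =
        (b - a) * (∫ t in a..b, h t ^ 2) - (∫ t in a..b, h t) ^ 2 := by
    simp only [c]
    field_simp
    ring
  nlinarith [mul_nonneg hba.le hvar]

variable {E : Type*} [NormedAddCommGroup E] [NormedSpace ℝ E] [CompleteSpace E]

theorem norm_sub_sq_le_mul_integral_norm_deriv_sq {g g' : ℝ → E} {a b : ℝ} (hab : a ≤ b)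
    (hg : ContinuousOn g (Icc a b)) (hg' : ContinuousOn g' (Icc a b))
    (hderiv : ∀ x ∈ Ioo a b, HasDerivAt g (g' x) x) :
    ‖g b - g a‖ ^ 2 ≤ (b - a) * ∫ t in a..b, ‖g' t‖ ^ 2 := by
  rw [← uIcc_of_le hab] at hg'
  rw [← intervalIntegral.integral_eq_sub_of_hasDerivAt_of_le hab hg hderiv hg'.intervalIntegrable]
  calc ‖∫ t in a..b, g' t‖ ^ 2 ≤ (∫ t in a..b, ‖g' t‖) ^ 2 := by
        gcongr
        exact intervalIntegral.norm_integral_le_integral_norm hab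
    _ ≤ _ := sq_integral_le_mul_integral_sq hab hg'.norm.intervalIntegrable
        (hg'.norm.pow 2).intervalIntegrable

theorem sum_norm_sub_sq_le_mul_integral_norm_deriv_sq {g g' : ℝ → E} {τ : ℝ} (hτ : 0 ≤ τ)
    (M : ℕ) (hg : ContinuousOn g (Icc 0 (M * τ))) (hg' : ContinuousOn g' (Icc 0 (M * τ)))
    (hderiv : ∀ x ∈ Ioo 0 (M * τ), HasDerivAt g (g' x) x) :
    ∑ k ∈ range M, ‖g ((k + 1 : ℕ) * τ) - g (k * τ)‖ ^ 2 ≤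
      τ * ∫ t in (0 : ℝ)..M * τ, ‖g' t‖ ^ 2 := by
  have hstep : ∀ k < M, ‖g ((k + 1 : ℕ) * τ) - g (k * τ)‖ ^ 2 ≤
      τ * ∫ t in k * τ..(k + 1 : ℕ) * τ, ‖g' t‖ ^ 2 := by
    intro k hk
    have hlo : 0 ≤ (k : ℝ) * τ := by positivity
    have hhi : ((k + 1 : ℕ) : ℝ) * τ ≤ M * τ := by gcongr; exact_mod_cast hk
    have hlen : ((k + 1 : ℕ) : ℝ) * τ - k * τ = τ := by push_cast; ring
    have := norm_sub_sq_le_mul_integral_norm_deriv_sq (by linarith)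
      (hg.mono (Icc_subset_Icc hlo hhi)) (hg'.mono (Icc_subset_Icc hlo hhi))
      fun x hx => hderiv x (Ioo_subset_Ioo hlo hhi hx)
    rwa [hlen] at this
  have hint : ∀ k < M,
      IntervalIntegrable (fun t => ‖g' t‖ ^ 2) volume (k * τ) ((k + 1 : ℕ) * τ) :=
    fun k hk => ((hg'.norm.pow 2).mono (Icc_subset_Icc (by positivity)
      (by gcongr; exact_mod_cast hk))).intervalIntegrable_of_Icc (by gcongr; simp)
  calc _ ≤ ∑ k ∈ range M, τ * ∫ t in k * τ..(k + 1 : ℕ) * τ, ‖g' t‖ ^ 2 :=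
        sum_le_sum fun k hk => hstep k (mem_range.1 hk)
    _ = τ * ∫ t in (0 : ℝ)..M * τ, ‖g' t‖ ^ 2 := by
        rw [← mul_sum,
          intervalIntegral.sum_integral_adjacent_intervals (a := fun k : ℕ => (k : ℝ) * τ) hint]
        simp

theorem sum_norm_sub_sq_le_of_contDiffOn {F : Type*} [NormedAddCommGroup F] [NormedSpace ℝ F]
    (L : F →L[ℝ] E) {u : ℝ → F} {T τ : ℝ} (hT : 0 < T) (hτ : 0 ≤ τ) (M : ℕ) (hMτ : M * τ = T)
    (hu : ContDiffOn ℝ 1 u (Icc 0 T)) :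
    ∑ k ∈ range M, ‖L (u ((k + 1 : ℕ) * τ)) - L (u (k * τ))‖ ^ 2 ≤
      τ * ∫ t in (0 : ℝ)..T, ‖L (derivWithin u (Icc 0 T) t)‖ ^ 2 := by
  have hu' : ContinuousOn (derivWithin u (Icc 0 T)) (Icc 0 T) :=
    hu.continuousOn_derivWithin (uniqueDiffOn_Icc hT) le_rfl
  subst hMτ
  refine sum_norm_sub_sq_le_mul_integral_norm_deriv_sq hτ M
    (L.continuous.comp_continuousOn hu.continuousOn) (L.continuous.comp_continuousOn hu')
    fun x hx => L.hasFDerivAt.comp_hasDerivAt x ?_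
  exact ((hu.differentiableOn one_ne_zero x (Ioo_subset_Icc_self hx)).hasDerivWithinAt).hasDerivAt
    (Icc_mem_nhds hx.1 hx.2)

end Calculus

theorem sq_sqrt_two_mul_cA_mul_rpow {S I : ℝ} (hS : 0 ≤ S) (hI : 0 ≤ I) :
    (√2 * cA * S ^ ((1 : ℝ) / 2) * I ^ ((1 : ℝ) / 4)) ^ 2 = (4 + √2) * S * √I := by
  have hI4 : I ^ ((1 : ℝ) / 4) = √√I := by
    rw [Real.sqrt_eq_rpow, Real.sqrt_eq_rpow, ← Real.rpow_mul hI]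
    norm_num
  rw [← Real.sqrt_eq_rpow, hI4, mul_pow, mul_pow, mul_pow, Real.sq_sqrt zero_le_two,
    Real.sq_sqrt hS, Real.sq_sqrt (Real.sqrt_nonneg I), cA, Real.sq_sqrt (by positivity)]
  ring

theorem le_sqrt_two_mul_cA_mul_rpow_add {x S I R : ℝ} (hS : 0 ≤ S) (hI : 0 ≤ I) (hR : 0 ≤ R)
    (h : x ^ 2 ≤ R ^ 2 + 2 * (S * √I)) :
    x ≤ √2 * cA * S ^ ((1 : ℝ) / 2) * I ^ ((1 : ℝ) / 4) + R := by
  have hQ0 : 0 ≤ √2 * cA * S ^ ((1 : ℝ) / 2) * I ^ ((1 : ℝ) / 4) := by unfold cA; positivity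
  have hQ := sq_sqrt_two_mul_cA_mul_rpow hS hI
  refine le_of_sq_le_sq ?_ (by positivity)
  nlinarith [mul_nonneg (Real.sqrt_nonneg 2) (mul_nonneg hS (Real.sqrt_nonneg I)),
    mul_nonneg hQ0 hR]

theorem le_sqrt_two_mul_cA_mul_rpow {x S I : ℝ} (hS : 0 ≤ S) (hI : 0 ≤ I)
    (h : x ^ 2 ≤ 4 * (S * √I)) :
    x ≤ √2 * cA * S ^ ((1 : ℝ) / 2) * I ^ ((1 : ℝ) / 4) := by
  refine le_of_sq_le_sq ?_ (by unfold cA; positivity)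
  rw [sq_sqrt_two_mul_cA_mul_rpow hS hI]
  nlinarith [mul_nonneg (Real.sqrt_nonneg 2) (mul_nonneg hS (Real.sqrt_nonneg I))]

/-- Theorem 2.1 of the paper: pointwise POD projection error bound for snapshots
of a function `u ∈ H¹(0,T,X)`, with `S` the averaged projection error
(equal to `(τ(M+1) Σ_{k>r} σ_k²)^{1/2}` by the POD identity); the term `S/√T`
can be dropped when the projection errors of the snapshots have zero mean. -/
theorem pointwise_pod_error_H1
    {X : Type*} [NormedAddCommGroup X] [InnerProductSpace ℝ X] [CompleteSpace X]
    (V : Submodule ℝ X) [CompleteSpace V]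
    (T : ℝ) (hT : 0 < T) (M : ℕ) (hM : 0 < M)
    (τ : ℝ) (hτ : τ = T / M)
    (u : ℝ → X) (hu : ContDiffOn ℝ 1 u (Set.Icc 0 T))
    (S : ℝ)
    (hS : S = Real.sqrt (τ * ∑ n ∈ Finset.range (M + 1),
        ‖u ((n:ℝ) * τ) - (Submodule.orthogonalProjectionOnto V (u ((n:ℝ) * τ)) : X)‖^2)) :
    (∀ n ≤ M,
      ‖u ((n:ℝ) * τ) - (Submodule.orthogonalProjectionOnto V (u ((n:ℝ) * τ)) : X)‖ ≤
        Real.sqrt 2 * cA * S ^ ((1:ℝ)/2) *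
          (∫ t in (0:ℝ)..T,
            ‖derivWithin u (Set.Icc 0 T) t
              - (Submodule.orthogonalProjectionOnto V (derivWithin u (Set.Icc 0 T) t) : X)‖^2) ^ ((1:ℝ)/4)
        + S / Real.sqrt T)
    ∧ ((∑ n ∈ Finset.range (M + 1),
          (u ((n:ℝ) * τ) - (Submodule.orthogonalProjectionOnto V (u ((n:ℝ) * τ)) : X))) = 0 →
        ∀ n ≤ M,
          ‖u ((n:ℝ) * τ) - (Submodule.orthogonalProjectionOnto V (u ((n:ℝ) * τ)) : X)‖ ≤
            Real.sqrt 2 * cA * S ^ ((1:ℝ)/2) *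
              (∫ t in (0:ℝ)..T,
                ‖derivWithin u (Set.Icc 0 T) t
                  - (Submodule.orthogonalProjectionOnto V (derivWithin u (Set.Icc 0 T) t) : X)‖^2) ^ ((1:ℝ)/4)) := by
  simp only [Submodule.coe_orthogonalProjectionOnto_apply] at hS ⊢
  have hτ0 : 0 < τ := by rw [hτ]; positivity
  have hMτ : (M : ℝ) * τ = T := by rw [hτ]; field_simp
  set e : ℕ → X := fun n => u (n * τ) - V.starProjection (u (n * τ))
  set A := ∑ m ∈ range (M + 1), ‖e m‖ ^ 2
  set B := ∑ k ∈ range M, ‖e (k + 1) - e k‖ ^ 2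
  set I := ∫ t in (0 : ℝ)..T,
    ‖derivWithin u (Icc 0 T) t - V.starProjection (derivWithin u (Icc 0 T) t)‖ ^ 2
  have hB : B ≤ τ * I := sum_norm_sub_sq_le_of_contDiffOn
    (ContinuousLinearMap.id ℝ X - V.starProjection) hT hτ0.le M hMτ hu
  have hS0 : 0 ≤ S := hS ▸ Real.sqrt_nonneg _
  have hI0 : 0 ≤ I := intervalIntegral.integral_nonneg hT.le fun _ _ => sq_nonneg _
  have hA : S ^ 2 = τ * A := by rw [hS]; exact Real.sq_sqrt (by positivity)
  have hAB : √B * √A ≤ S * √I := by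
    rw [← Real.sqrt_mul (by positivity), ← Real.sqrt_sq hS0, ← Real.sqrt_mul (sq_nonneg _), hA]
    exact Real.sqrt_le_sqrt (by nlinarith [mul_le_mul_of_nonneg_right hB (by positivity : 0 ≤ A)])
  refine ⟨fun n hn => le_sqrt_two_mul_cA_mul_rpow_add hS0 hI0 (by positivity) ?_,
    fun hmean n hn => le_sqrt_two_mul_cA_mul_rpow hS0 hI0 ?_⟩
  · have hmeanA : A / (M + 1) ≤ (S / √T) ^ 2 := by
      rw [div_pow, Real.sq_sqrt hT.le, hA, ← hMτ, mul_comm (M : ℝ) τ, mul_div_mul_left _ _ hτ0.ne']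
      gcongr
      linarith
    linarith [norm_sq_le_mean_add_sum e hn, sum_norm_sub_mul_le e M]
  · linarith [norm_sq_le_of_sum_eq_zero e hmean hn]
end

section
/- Let f = (f_n)_{n=0}^M be a sequence in X with f_0 + f_1 + ⋯ + f_M = 0. Then for every 0 ≤ n ≤ M, ‖f_n‖ ≤ c_A · ‖f‖_0^{1/2} · ‖Df‖_0^{1/2}, where c_A = √(2 + √2/2). -/
/-- backward difference quotient of a sequence, `(Dq τ f) n = (f n - f (n-1))/τ`. -/
noncomputable def Dq {X : Type*} [NormedAddCommGroup X] [NormedSpace ℝ X] (τ : ℝ) (f : ℕ → X) : ℕ → X :=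
  fun n => τ⁻¹ • (f n - f (n - 1))

/-- discrete `L²` norm `(τ Σ_{n=a}^{b} ‖f n‖²)^{1/2}`. -/
noncomputable def seqNorm0 {X : Type*} [NormedAddCommGroup X]
    (τ : ℝ) (a b : ℕ) (f : ℕ → X) : ℝ :=
  Real.sqrt (τ * ∑ n ∈ Finset.Icc a b, ‖f n‖^2)

open Finset

section Metric

variable {α : Type*} [PseudoMetricSpace α]

theorem dist_le_sum_range_dist (f : ℕ → α) {M a b : ℕ} (ha : a ≤ M) (hb : b ≤ M) :
    dist (f a) (f b) ≤ ∑ k ∈ range M, dist (f k) (f (k + 1)) := by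
  wlog hab : a ≤ b generalizing a b
  · rw [dist_comm]; exact this hb ha (le_of_not_ge hab)
  calc dist (f a) (f b) ≤ ∑ k ∈ Ico a b, dist (f k) (f (k + 1)) := dist_le_Ico_sum_dist f hab
    _ ≤ _ := sum_le_sum_of_subset_of_nonneg (range_eq_Ico M ▸ Ico_subset_Ico (Nat.zero_le a) hb)
        fun _ _ _ ↦ dist_nonneg

theorem dist_sq_le_abs_sub_mul_sum_range_dist_sq (f : ℕ → α) {M a b : ℕ} (ha : a ≤ M)
    (hb : b ≤ M) :
    dist (f a) (f b) ^ 2 ≤ |(a : ℝ) - b| * ∑ k ∈ range M, dist (f k) (f (k + 1)) ^ 2 := by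
  wlog hab : a ≤ b generalizing a b
  · rw [dist_comm, abs_sub_comm]; exact this hb ha (le_of_not_ge hab)
  have hsub : Ico a b ⊆ range M := range_eq_Ico M ▸ Ico_subset_Ico (Nat.zero_le a) hb
  have hcard : (#(Ico a b) : ℝ) = |(a : ℝ) - b| := by
    rw [Nat.card_Ico, Nat.cast_sub hab, abs_sub_comm, abs_of_nonneg (by simpa using hab)]
  calc dist (f a) (f b) ^ 2 ≤ (∑ k ∈ Ico a b, dist (f k) (f (k + 1))) ^ 2 := by
        gcongr; exact dist_le_Ico_sum_dist f hab
    _ ≤ #(Ico a b) * ∑ k ∈ Ico a b, dist (f k) (f (k + 1)) ^ 2 := sq_sum_le_card_mul_sum_sq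
    _ ≤ _ := by
        rw [hcard]
        exact mul_le_mul_of_nonneg_left
          (sum_le_sum_of_subset_of_nonneg hsub fun _ _ _ ↦ sq_nonneg _) (abs_nonneg _)

end Metric

theorem le_sum_range_div_add_sum_range_dist (g : ℕ → ℝ) {M n : ℕ} (hn : n ≤ M) :
    g n ≤ (∑ m ∈ range (M + 1), g m) / (M + 1) +
      ∑ k ∈ range M, dist (g k) (g (k + 1)) := by
  set V := ∑ k ∈ range M, dist (g k) (g (k + 1))
  have hpoint : ∀ m ∈ range (M + 1), g n ≤ g m + V := fun m hm ↦ by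
    have := dist_le_sum_range_dist g hn (mem_range_succ_iff.1 hm)
    linarith [le_abs_self (g n - g m), Real.dist_eq (g n) (g m)]
  have hsum := sum_le_sum hpoint
  simp only [sum_const, card_range, nsmul_eq_mul, sum_add_distrib, Nat.cast_add_one] at hsum
  rw [div_add' _ _ _ (by positivity), le_div_iff₀ (by positivity)]
  linarith

theorem card_mul_norm_le_sum_dist {ι E : Type*} [NormedAddCommGroup E] [NormedSpace ℝ E]
    {s : Finset ι} {f : ι → E} (hf : ∑ i ∈ s, f i = 0) (x : E) :
    #s * ‖x‖ ≤ ∑ i ∈ s, dist x (f i) :=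
  calc #s * ‖x‖ = ‖∑ i ∈ s, (x - f i)‖ := by
        rw [sum_sub_distrib, hf, sub_zero, sum_const, RCLike.norm_nsmul ℝ, nsmul_eq_mul]
    _ ≤ ∑ i ∈ s, ‖x - f i‖ := norm_sum_le _ _
    _ = ∑ i ∈ s, dist x (f i) := by simp only [dist_eq_norm]

theorem sum_range_sum_range_abs_sub_le (N : ℕ) :
    ∑ a ∈ range N, ∑ b ∈ range N, |(a : ℝ) - b| ≤ N ^ 3 / 2 := by
  have hgauss (K : ℕ) : (∑ b ∈ range K, (b : ℝ)) * 2 = K * (K - 1) := by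
    induction K with
    | zero => simp
    | succ K ih => rw [sum_range_succ, add_mul, ih]; push_cast; ring
  induction N with
  | zero => simp
  | succ N ih =>
    have hrow : ∑ b ∈ range N, |(N : ℝ) - b| = N * (N + 1) / 2 := by
      have hle : ∀ b ∈ range N, (b : ℝ) ≤ N := fun b hb ↦ by
        exact_mod_cast (mem_range.1 hb).le
      rw [sum_congr rfl fun b hb ↦ abs_of_nonneg (sub_nonneg.2 (hle b hb)), sum_sub_distrib,
        sum_const, card_range, nsmul_eq_mul]
      linarith [hgauss N]
    have hcol : ∑ a ∈ range N, |(a : ℝ) - N| = N * (N + 1) / 2 := by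
      simp_rw [abs_sub_comm _ (N : ℝ)]; exact hrow
    simp only [sum_range_succ, sum_add_distrib, hrow, hcol, sub_self, abs_zero, add_zero]
    push_cast
    nlinarith [ih, sq_nonneg (N : ℝ)]

section NormedSpace

variable {E : Type*} [NormedAddCommGroup E] [NormedSpace ℝ E]

theorem sum_range_sq_norm_le_of_sum_eq_zero {f : ℕ → E} {M : ℕ}
    (hf : ∑ k ∈ range (M + 1), f k = 0) :
    ∑ a ∈ range (M + 1), ‖f a‖ ^ 2 ≤
      (M + 1) ^ 2 / 2 * ∑ k ∈ range M, dist (f k) (f (k + 1)) ^ 2 := by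
  set Q := ∑ k ∈ range M, dist (f k) (f (k + 1)) ^ 2
  have hM : (0 : ℝ) < M + 1 := by positivity
  have hpoint : ∀ a ∈ range (M + 1),
      (M + 1) * ‖f a‖ ^ 2 ≤ (∑ b ∈ range (M + 1), |(a : ℝ) - b|) * Q := by
    intro a ha
    have hcentered := card_mul_norm_le_sum_dist hf (f a)
    rw [card_range, Nat.cast_add_one] at hcentered
    refine le_of_mul_le_mul_left ?_ hM
    calc (M + 1) * ((M + 1) * ‖f a‖ ^ 2) = ((M + 1) * ‖f a‖) ^ 2 := by ring
      _ ≤ (∑ b ∈ range (M + 1), dist (f a) (f b)) ^ 2 :=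
          pow_le_pow_left₀ (by positivity) hcentered 2
      _ ≤ (M + 1) * ∑ b ∈ range (M + 1), dist (f a) (f b) ^ 2 := by
          simpa using
            sq_sum_le_card_mul_sum_sq (s := range (M + 1)) (f := fun b ↦ dist (f a) (f b))
      _ ≤ (M + 1) * ∑ b ∈ range (M + 1), |(a : ℝ) - b| * Q := by
          gcongr with b hb
          exact dist_sq_le_abs_sub_mul_sum_range_dist_sq f (mem_range_succ_iff.1 ha)
            (mem_range_succ_iff.1 hb)
      _ = (M + 1) * ((∑ b ∈ range (M + 1), |(a : ℝ) - b|) * Q) := by rw [sum_mul]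
  have hsum := sum_le_sum hpoint
  rw [← mul_sum, ← sum_mul] at hsum
  have hdouble := sum_range_sum_range_abs_sub_le (M + 1)
  push_cast at hdouble
  refine le_of_mul_le_mul_left ?_ hM
  calc (M + 1) * ∑ a ∈ range (M + 1), ‖f a‖ ^ 2
      ≤ (∑ a ∈ range (M + 1), ∑ b ∈ range (M + 1), |(a : ℝ) - b|) * Q := hsum
    _ ≤ (M + 1) ^ 3 / 2 * Q := by gcongr
    _ = (M + 1) * ((M + 1) ^ 2 / 2 * Q) := by ring

end NormedSpace

theorem dist_sq_norm_le {E : Type*} [SeminormedAddCommGroup E] (x y : E) :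
    dist (‖x‖ ^ 2) (‖y‖ ^ 2) ≤ dist x y * ‖x‖ + dist x y * ‖y‖ := by
  rw [Real.dist_eq, dist_eq_norm, ← mul_add, sq_sub_sq, abs_mul, mul_comm,
    abs_of_nonneg (add_nonneg (norm_nonneg x) (norm_nonneg y))]
  gcongr
  exact abs_norm_sub_norm_le x y

theorem sum_range_dist_sq_norm_le {E : Type*} [SeminormedAddCommGroup E] (f : ℕ → E) (M : ℕ) :
    ∑ k ∈ range M, dist (‖f k‖ ^ 2) (‖f (k + 1)‖ ^ 2) ≤
      2 * (√(∑ k ∈ range (M + 1), ‖f k‖ ^ 2) *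
        √(∑ k ∈ range M, dist (f k) (f (k + 1)) ^ 2)) := by
  set P := ∑ k ∈ range (M + 1), ‖f k‖ ^ 2
  set Q := ∑ k ∈ range M, dist (f k) (f (k + 1)) ^ 2
  have hleft : ∑ k ∈ range M, dist (f k) (f (k + 1)) * ‖f k‖ ≤ √P * √Q := by
    refine (Real.sum_mul_le_sqrt_mul_sqrt _ _ _).trans ?_
    rw [mul_comm]
    gcongr
    exact (le_add_of_nonneg_right (sq_nonneg ‖f M‖)).trans_eq (sum_range_succ _ M).symm
  have hright : ∑ k ∈ range M, dist (f k) (f (k + 1)) * ‖f (k + 1)‖ ≤ √P * √Q := by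
    refine (Real.sum_mul_le_sqrt_mul_sqrt _ _ _).trans ?_
    rw [mul_comm]
    gcongr
    exact (le_add_of_nonneg_right (sq_nonneg ‖f 0‖)).trans_eq
      (sum_range_succ' (fun k ↦ ‖f k‖ ^ 2) M).symm
  calc ∑ k ∈ range M, dist (‖f k‖ ^ 2) (‖f (k + 1)‖ ^ 2)
      ≤ ∑ k ∈ range M,
          (dist (f k) (f (k + 1)) * ‖f k‖ + dist (f k) (f (k + 1)) * ‖f (k + 1)‖) :=
        sum_le_sum fun k _ ↦ dist_sq_norm_le _ _
    _ ≤ 2 * (√P * √Q) := by rw [sum_add_distrib]; linarith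

theorem sq_norm_le_of_sum_range_eq_zero {E : Type*} [NormedAddCommGroup E] [NormedSpace ℝ E]
    {f : ℕ → E} {M n : ℕ} (hf : ∑ k ∈ range (M + 1), f k = 0) (hn : n ≤ M) :
    ‖f n‖ ^ 2 ≤ (2 + √2 / 2) *
      (√(∑ k ∈ range (M + 1), ‖f k‖ ^ 2) *
        √(∑ k ∈ range M, dist (f k) (f (k + 1)) ^ 2)) := by
  set P := ∑ k ∈ range (M + 1), ‖f k‖ ^ 2
  set Q := ∑ k ∈ range M, dist (f k) (f (k + 1)) ^ 2
  have hM : (0 : ℝ) < M + 1 := by positivity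
  have hmean := le_sum_range_div_add_sum_range_dist (fun k ↦ ‖f k‖ ^ 2) hn
  have hvar := sum_range_dist_sq_norm_le f M
  have hpoincare : √P ≤ (M + 1) / √2 * √Q := by
    calc √P ≤ √((M + 1) ^ 2 / 2 * Q) :=
          Real.sqrt_le_sqrt (sum_range_sq_norm_le_of_sum_eq_zero hf)
      _ = (M + 1) / √2 * √Q := by
        rw [Real.sqrt_mul (by positivity), Real.sqrt_div' _ (by norm_num), Real.sqrt_sq hM.le]
  have hP : P / (M + 1) ≤ √2 / 2 * (√P * √Q) := by
    rw [div_le_iff₀ hM]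
    calc P = √P * √P := (Real.mul_self_sqrt (by positivity)).symm
      _ ≤ √P * ((M + 1) / √2 * √Q) := by gcongr
      _ = √2 / 2 * (√P * √Q) * (M + 1) := by
        field_simp
        rw [Real.sq_sqrt (by norm_num)]
        ring
  linarith

theorem seqNorm0_nonneg {X : Type*} [NormedAddCommGroup X] (τ : ℝ) (a b : ℕ) (f : ℕ → X) :
    0 ≤ seqNorm0 τ a b f :=
  Real.sqrt_nonneg _

theorem seqNorm0_mul_seqNorm0_Dq {X : Type*} [NormedAddCommGroup X] [NormedSpace ℝ X] {τ : ℝ}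
    (hτ : 0 < τ) (M : ℕ) (f : ℕ → X) :
    seqNorm0 τ 0 M f * seqNorm0 τ 1 M (Dq τ f) =
      √(∑ k ∈ range (M + 1), ‖f k‖ ^ 2) *
        √(∑ k ∈ range M, dist (f k) (f (k + 1)) ^ 2) := by
  have hDq : ∑ k ∈ Icc 1 M, ‖Dq τ f k‖ ^ 2 =
      τ⁻¹ ^ 2 * ∑ k ∈ range M, dist (f k) (f (k + 1)) ^ 2 := by
    calc ∑ k ∈ Icc 1 M, ‖Dq τ f k‖ ^ 2 = ∑ k ∈ range M, ‖Dq τ f (k + 1)‖ ^ 2 := by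
          rw [range_eq_Ico, ← Ico_add_one_right_eq_Icc,
            sum_Ico_add' (f := fun k ↦ ‖Dq τ f k‖ ^ 2)]
      _ = _ := by
          rw [mul_sum]
          refine sum_congr rfl fun k _ ↦ ?_
          rw [Dq, norm_smul, Real.norm_eq_abs, abs_of_pos (inv_pos.2 hτ), add_tsub_cancel_right,
            dist_comm, dist_eq_norm, mul_pow]
  rw [seqNorm0, seqNorm0, ← Nat.range_succ_eq_Icc_zero, hDq, ← Real.sqrt_mul (by positivity),
    ← Real.sqrt_mul (by positivity)]
  congr 1
  field_simp

theorem discrete_agmon_general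
    {X : Type*} [NormedAddCommGroup X] [InnerProductSpace ℝ X]
    (T : ℝ) (hT : 0 < T) (M : ℕ) (hM : 0 < M) (τ : ℝ) (hτ : τ = T / M)
    (f : ℕ → X) (hmean : ∑ n ∈ Finset.range (M + 1), f n = 0)
    (n : ℕ) (hn : n ≤ M) :
    ‖f n‖ ≤ cA * (seqNorm0 τ 0 M f) ^ ((1:ℝ)/2) * (seqNorm0 τ 1 M (Dq τ f)) ^ ((1:ℝ)/2) := by
  have hτ0 : 0 < τ := hτ ▸ div_pos hT (Nat.cast_pos.2 hM)
  have hcA : (0 : ℝ) ≤ 2 + √2 / 2 := by positivity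
  rw [← Real.sqrt_eq_rpow, ← Real.sqrt_eq_rpow, cA, ← Real.sqrt_mul hcA,
    ← Real.sqrt_mul (mul_nonneg hcA (seqNorm0_nonneg ..)), mul_assoc,
    seqNorm0_mul_seqNorm0_Dq hτ0]
  exact Real.le_sqrt_of_sq_le (sq_norm_le_of_sum_range_eq_zero hmean hn)

/-- Discrete Agmon inequality (Lemma 4.1): for a zero-mean sequence
`f_0, …, f_M` in a real Hilbert space,
`‖f_n‖ ≤ c_A ‖f‖₀^{1/2} ‖Df‖₀^{1/2}` with `c_A = √(2 + √2/2)`. -/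
theorem discrete_agmon
    {X : Type*} [NormedAddCommGroup X] [InnerProductSpace ℝ X] [CompleteSpace X]
    (T : ℝ) (hT : 0 < T) (M : ℕ) (hM : 0 < M) (τ : ℝ) (hτ : τ = T / M)
    (f : ℕ → X) (hmean : ∑ n ∈ Finset.range (M + 1), f n = 0)
    (n : ℕ) (hn : n ≤ M) :
    ‖f n‖ ≤ cA * (seqNorm0 τ 0 M f) ^ ((1:ℝ)/2) * (seqNorm0 τ 1 M (Dq τ f)) ^ ((1:ℝ)/2) :=
  discrete_agmon_general T hT M hM τ hτ f hmean n hn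
end

section
/- Let f = (f_n)_{n=0}^M be any sequence in X. Then for all 0 ≤ m, n ≤ M, ‖f_n‖² − ‖f_m‖² ≤ 2 · ‖f‖_0 · ‖Df‖_0. -/
private lemma tele_abs (g : ℕ → ℝ) : ∀ n m : ℕ, m ≤ n →
    |g n - g m| ≤ ∑ k ∈ Finset.Icc (m+1) n, |g k - g (k-1)| := by
  intro n m h
  induction n, h using Nat.le_induction with
  | base => simp
  | succ n hmn ih =>
      rw [Finset.sum_Icc_succ_top (by omega)]
      have h1 := abs_sub_le (g (n+1)) (g n) (g m)
      have h2 : (n+1) - 1 = n := by omega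
      rw [h2]
      have h3 : |g (n+1) - g n| = |g (n+1) - g n| := rfl
      calc |g (n+1) - g m| ≤ |g (n+1) - g n| + |g n - g m| := h1
        _ ≤ |g (n+1) - g n| + ∑ k ∈ Finset.Icc (m+1) n, |g k - g (k-1)| := by linarith
        _ = _ := by ring

private lemma norm_sq_diff_le {X : Type*} [NormedAddCommGroup X] (a b : X) :
    |‖a‖^2 - ‖b‖^2| ≤ (‖a‖ + ‖b‖) * ‖a - b‖ := by
  have h1 : ‖a‖^2 - ‖b‖^2 = (‖a‖ - ‖b‖) * (‖a‖ + ‖b‖) := by ring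
  rw [h1, abs_mul, abs_of_nonneg (by positivity : (0:ℝ) ≤ ‖a‖ + ‖b‖), mul_comm]
  exact mul_le_mul_of_nonneg_left (abs_norm_sub_norm_le a b) (by positivity)

/-- Estimate (ag1) in the proof of the discrete Agmon inequality:
`‖f_n‖² − ‖f m‖² ≤ 2 ‖f‖₀ ‖Df‖₀` for any sequence (no zero-mean assumption). -/
theorem discrete_agmon_ag1
    {X : Type*} [NormedAddCommGroup X] [InnerProductSpace ℝ X] [CompleteSpace X]
    (T : ℝ) (hT : 0 < T) (M : ℕ) (hM : 0 < M) (τ : ℝ) (hτ : τ = T / M)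
    (f : ℕ → X) (m n : ℕ) (hm : m ≤ M) (hn : n ≤ M) :
    ‖f n‖^2 - ‖f m‖^2 ≤ 2 * seqNorm0 τ 0 M f * seqNorm0 τ 1 M (Dq τ f) := by
  have hτ0 : 0 < τ := by
    rw [hτ]; positivity
  set d : ℕ → X := fun k => f k - f (k-1) with hd
  -- Step 1
  have key : ∀ p q : ℕ, p ≤ q → q ≤ M →
      |‖f q‖^2 - ‖f p‖^2| ≤ ∑ k ∈ Finset.Icc 1 M, (‖f k‖ + ‖f (k-1)‖) * ‖d k‖ := by
    intro p q hpq hqM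
    calc |‖f q‖^2 - ‖f p‖^2|
        ≤ ∑ k ∈ Finset.Icc (p+1) q, |‖f k‖^2 - ‖f (k-1)‖^2| :=
          tele_abs (fun k => ‖f k‖^2) q p hpq
      _ ≤ ∑ k ∈ Finset.Icc (p+1) q, (‖f k‖ + ‖f (k-1)‖) * ‖d k‖ :=
          Finset.sum_le_sum fun k _ => norm_sq_diff_le (f k) (f (k-1))
      _ ≤ ∑ k ∈ Finset.Icc 1 M, (‖f k‖ + ‖f (k-1)‖) * ‖d k‖ := by
          apply Finset.sum_le_sum_of_subset_of_nonneg
          · intro k hk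
            simp only [Finset.mem_Icc] at hk ⊢
            omega
          · intro k _ _
            positivity
  have main : ‖f n‖^2 - ‖f m‖^2 ≤ ∑ k ∈ Finset.Icc 1 M, (‖f k‖ + ‖f (k-1)‖) * ‖d k‖ := by
    rcases le_total m n with h | h
    · exact (le_abs_self _).trans (key m n h hn)
    · have := key n m h hm
      rw [abs_sub_comm] at this
      exact (le_abs_self _).trans this
  -- Step 2: Cauchy-Schwarz
  have hsub1 : ∑ k ∈ Finset.Icc 1 M, ‖f k‖^2 ≤ ∑ k ∈ Finset.Icc 0 M, ‖f k‖^2 := by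
    apply Finset.sum_le_sum_of_subset_of_nonneg
    · intro k hk; simp only [Finset.mem_Icc] at hk ⊢; omega
    · intro k _ _; positivity
  have hsub2 : ∑ k ∈ Finset.Icc 1 M, ‖f (k-1)‖^2 ≤ ∑ k ∈ Finset.Icc 0 M, ‖f k‖^2 := by
    have hre : ∑ k ∈ Finset.Icc 1 M, ‖f (k-1)‖^2 = ∑ k ∈ Finset.range M, ‖f k‖^2 := by
      rw [← Finset.Ico_add_one_right_eq_Icc, Finset.sum_Ico_eq_sum_range]
      simp
    have hre2 : ∑ k ∈ Finset.Icc 0 M, ‖f k‖^2 = ∑ k ∈ Finset.range (M+1), ‖f k‖^2 := by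
      rw [← Finset.Ico_add_one_right_eq_Icc, Finset.sum_Ico_eq_sum_range]
      simp
    rw [hre, hre2]
    apply Finset.sum_le_sum_of_subset_of_nonneg
    · intro k hk; simp only [Finset.mem_range] at hk ⊢; omega
    · intro k _ _; positivity
  have cs1 : ∑ k ∈ Finset.Icc 1 M, ‖f k‖ * ‖d k‖ ≤
      Real.sqrt (∑ k ∈ Finset.Icc 0 M, ‖f k‖^2) *
        Real.sqrt (∑ k ∈ Finset.Icc 1 M, ‖d k‖^2) := by
    refine (Real.sum_mul_le_sqrt_mul_sqrt (Finset.Icc 1 M)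
      (fun k => ‖f k‖) (fun k => ‖d k‖)).trans ?_
    exact mul_le_mul_of_nonneg_right (Real.sqrt_le_sqrt hsub1) (Real.sqrt_nonneg _)
  have cs2 : ∑ k ∈ Finset.Icc 1 M, ‖f (k-1)‖ * ‖d k‖ ≤
      Real.sqrt (∑ k ∈ Finset.Icc 0 M, ‖f k‖^2) *
        Real.sqrt (∑ k ∈ Finset.Icc 1 M, ‖d k‖^2) := by
    refine (Real.sum_mul_le_sqrt_mul_sqrt (Finset.Icc 1 M)
      (fun k => ‖f (k-1)‖) (fun k => ‖d k‖)).trans ?_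
    exact mul_le_mul_of_nonneg_right (Real.sqrt_le_sqrt hsub2) (Real.sqrt_nonneg _)
  have step2 : ∑ k ∈ Finset.Icc 1 M, (‖f k‖ + ‖f (k-1)‖) * ‖d k‖ ≤
      2 * (Real.sqrt (∑ k ∈ Finset.Icc 0 M, ‖f k‖^2) *
        Real.sqrt (∑ k ∈ Finset.Icc 1 M, ‖d k‖^2)) := by
    have hsplit : ∑ k ∈ Finset.Icc 1 M, (‖f k‖ + ‖f (k-1)‖) * ‖d k‖
        = (∑ k ∈ Finset.Icc 1 M, ‖f k‖ * ‖d k‖)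
          + ∑ k ∈ Finset.Icc 1 M, ‖f (k-1)‖ * ‖d k‖ := by
      rw [← Finset.sum_add_distrib]
      apply Finset.sum_congr rfl
      intro k _; ring
    rw [hsplit]; linarith
  -- Step 3: identify the RHS
  have hnormDq : ∀ k, ‖Dq τ f k‖^2 = τ⁻¹^2 * ‖d k‖^2 := by
    intro k
    rw [Dq, norm_smul]
    simp [abs_of_pos (inv_pos.mpr hτ0), mul_pow, hd]
  have hRHS : 2 * seqNorm0 τ 0 M f * seqNorm0 τ 1 M (Dq τ f)
      = 2 * (Real.sqrt (∑ k ∈ Finset.Icc 0 M, ‖f k‖^2) *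
        Real.sqrt (∑ k ∈ Finset.Icc 1 M, ‖d k‖^2)) := by
    rw [seqNorm0, seqNorm0]
    have h1 : τ * ∑ k ∈ Finset.Icc 1 M, ‖Dq τ f k‖^2
        = τ⁻¹ * ∑ k ∈ Finset.Icc 1 M, ‖d k‖^2 := by
      simp only [hnormDq, ← Finset.mul_sum]
      field_simp
    rw [h1]
    rw [Real.sqrt_mul hτ0.le, Real.sqrt_mul (by positivity : (0:ℝ) ≤ τ⁻¹)]
    have h2 : Real.sqrt τ * Real.sqrt τ⁻¹ = 1 := by
      rw [← Real.sqrt_mul hτ0.le, mul_inv_cancel₀ hτ0.ne', Real.sqrt_one]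
    calc 2 * (Real.sqrt τ * Real.sqrt (∑ k ∈ Finset.Icc 0 M, ‖f k‖^2)) *
          (Real.sqrt τ⁻¹ * Real.sqrt (∑ k ∈ Finset.Icc 1 M, ‖d k‖^2))
        = 2 * (Real.sqrt (∑ k ∈ Finset.Icc 0 M, ‖f k‖^2) *
            Real.sqrt (∑ k ∈ Finset.Icc 1 M, ‖d k‖^2)) * (Real.sqrt τ * Real.sqrt τ⁻¹) := by
          ring
      _ = _ := by rw [h2, mul_one]
  rw [hRHS]
  exact main.trans step2
end

section
/- Let f = (f_n)_{n=0}^M be a sequence in X with f_0 + f_1 + ⋯ + f_M = 0, and define the trapezoidal norm ‖f‖_0' = ((τ/2)‖f_0‖² + τ Σ_{n=1}^{M−1} ‖f_n‖² + (τ/2)‖f_M‖²)^{1/2}. Then for every 0 ≤ n ≤ M, ‖f_n‖ ≤ c_A · (‖f‖_0')^{1/2} · ‖Df‖_0^{1/2}, where c_A = √(2 + √2/2). -/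
lemma tele_norm' {E : Type*} [SeminormedAddCommGroup E] (u : ℕ → E) (k : ℕ) :
    ∀ n, k ≤ n → ‖u n - u k‖ ≤ ∑ j ∈ Finset.Icc (k+1) n, ‖u j - u (j-1)‖ := by
  intro n
  induction n with
  | zero =>
    intro h
    interval_cases k
    simp
  | succ m ih =>
    intro h
    rcases Nat.lt_or_ge k (m+1) with h1 | h2
    · have hk : k ≤ m := Nat.lt_succ_iff.mp h1
      rw [Finset.sum_Icc_succ_top (by omega : k + 1 ≤ m + 1)]
      have e : u (m+1) - u k = (u m - u k) + (u (m+1) - u m) := by abel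
      calc ‖u (m+1) - u k‖ ≤ ‖u m - u k‖ + ‖u (m+1) - u m‖ := by
            rw [e]; exact norm_add_le _ _
        _ ≤ _ := by
            have h2 := ih hk
            simp only [Nat.add_sub_cancel]
            linarith
    · have : k = m + 1 := le_antisymm h h2
      subst this; simp

lemma gaussR (n : ℕ) : ∑ k ∈ Finset.range n, (k : ℝ) = n * (n - 1) / 2 := by
  induction n with
  | zero => simp
  | succ m ih => rw [Finset.sum_range_succ, ih]; push_cast; ring

lemma abs_dist_sum (M m : ℕ) (hm : m ≤ M) :
    ∑ k ∈ Finset.range (M+1), |(m:ℝ) - k| ≤ M * (M+1) / 2 := by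
  have hsplit : ∑ k ∈ Finset.range (M+1), |(m:ℝ) - k|
      = ∑ k ∈ Finset.Ico 0 (m+1), |(m:ℝ) - k| + ∑ k ∈ Finset.Ico (m+1) (M+1), |(m:ℝ) - k| := by
    rw [Finset.range_eq_Ico, Finset.sum_Ico_consecutive]
    · omega
    · omega
  have h1 : ∑ k ∈ Finset.Ico 0 (m+1), |(m:ℝ) - k| = m * (m+1) / 2 := by
    rw [← Finset.range_eq_Ico]
    have : ∀ k ∈ Finset.range (m+1), |(m:ℝ) - k| = (m:ℝ) - k := by
      intro k hk
      rw [abs_of_nonneg]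
      have : (k:ℝ) ≤ m := by
        exact_mod_cast Nat.lt_succ_iff.mp (Finset.mem_range.mp hk)
      linarith
    rw [Finset.sum_congr rfl this, Finset.sum_sub_distrib, Finset.sum_const,
      Finset.card_range, gaussR]
    push_cast; ring
  have h2 : ∑ k ∈ Finset.Ico (m+1) (M+1), |(m:ℝ) - k|
      = ((M-m:ℕ):ℝ) * ((M-m:ℕ) + 1) / 2 := by
    rw [Finset.sum_Ico_eq_sum_range]
    have e : M + 1 - (m + 1) = M - m := by omega
    rw [e]
    have : ∀ i ∈ Finset.range (M - m), |(m:ℝ) - ((m + 1 + i : ℕ):ℝ)| = (i:ℝ) + 1 := by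
      intro i _
      push_cast
      rw [abs_of_nonpos (by linarith)]
      ring
    rw [Finset.sum_congr rfl this, Finset.sum_add_distrib, Finset.sum_const,
      Finset.card_range, gaussR]
    ring
  rw [hsplit, h1, h2]
  have hMm : ((M - m : ℕ) : ℝ) = (M:ℝ) - m := by
    push_cast [Nat.cast_sub hm]; ring
  rw [hMm]
  have hm' : (0:ℝ) ≤ m := Nat.cast_nonneg m
  have hM' : (m:ℝ) ≤ M := Nat.cast_le.mpr hm
  nlinarith [mul_nonneg hm' (sub_nonneg.mpr hM')]

set_option maxHeartbeats 1000000 in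
/-- Discrete Agmon inequality with the trapezoidal-rule norm (Remark 4.1). -/
theorem discrete_agmon_trapezoidal
    {X : Type*} [NormedAddCommGroup X] [InnerProductSpace ℝ X] [CompleteSpace X]
    (T : ℝ) (hT : 0 < T) (M : ℕ) (hM : 0 < M) (τ : ℝ) (hτ : τ = T / M)
    (f : ℕ → X) (hmean : ∑ n ∈ Finset.range (M + 1), f n = 0)
    (Ntrap : ℝ)
    (hNtrap : Ntrap = Real.sqrt (τ / 2 * ‖f 0‖^2 + τ * ∑ n ∈ Finset.Ico 1 M, ‖f n‖^2
        + τ / 2 * ‖f M‖^2))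
    (n : ℕ) (hn : n ≤ M) :
    ‖f n‖ ≤ cA * Ntrap ^ ((1:ℝ)/2) * (seqNorm0 τ 1 M (Dq τ f)) ^ ((1:ℝ)/2) := by
  have hM1 : (1:ℝ) ≤ (M:ℝ) := by exact_mod_cast hM
  have hMpos : (0:ℝ) < (M:ℝ) := by linarith
  have hτ0 : 0 < τ := by rw [hτ]; positivity
  have hTM : T = τ * M := by rw [hτ]; field_simp
  set G : ℝ := ∑ j ∈ Finset.Icc 1 M, ‖Dq τ f j‖ ^ 2 with hGdef
  have hG0 : 0 ≤ G := Finset.sum_nonneg fun j _ => sq_nonneg _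
  set D : ℝ := seqNorm0 τ 1 M (Dq τ f) with hDdef
  have hDval : D = Real.sqrt τ * Real.sqrt G := by
    rw [hDdef, seqNorm0, Real.sqrt_mul hτ0.le]
  have hD0 : 0 ≤ D := Real.sqrt_nonneg _
  have hτs : Real.sqrt τ * Real.sqrt τ = τ := Real.mul_self_sqrt hτ0.le
  have hdiff : ∀ j : ℕ, ‖f j - f (j-1)‖ = τ * ‖Dq τ f j‖ := by
    intro j
    have e : f j - f (j-1) = τ • Dq τ f j := by
      rw [Dq, smul_smul, mul_inv_cancel₀ hτ0.ne', one_smul]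
    rw [e, norm_smul, Real.norm_eq_abs, abs_of_pos hτ0]
  -- telescoping + Cauchy-Schwarz bound on increments
  have htel : ∀ k m : ℕ, k ≤ m → m ≤ M →
      ‖f m - f k‖ ≤ Real.sqrt τ * Real.sqrt ((m:ℝ) - k) * D := by
    intro k m hkm hmM
    have t1 := tele_norm' f k m hkm
    have t2 : ∑ j ∈ Finset.Icc (k+1) m, ‖f j - f (j-1)‖
        = τ * ∑ j ∈ Finset.Icc (k+1) m, ‖Dq τ f j‖ := by
      rw [Finset.mul_sum]
      exact Finset.sum_congr rfl fun j _ => hdiff j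
    have t3 : ∑ j ∈ Finset.Icc (k+1) m, ‖Dq τ f j‖
        ≤ Real.sqrt ((m:ℝ) - k) * Real.sqrt G := by
      have c1 : ∑ j ∈ Finset.Icc (k+1) m, ‖Dq τ f j‖
          = ∑ j ∈ Finset.Icc (k+1) m, 1 * ‖Dq τ f j‖ := by simp
      have c2 := Real.sum_mul_le_sqrt_mul_sqrt (Finset.Icc (k+1) m)
        (fun _ => (1:ℝ)) (fun j => ‖Dq τ f j‖)
      have c3 : ∑ j ∈ Finset.Icc (k+1) m, (1:ℝ)^2 = (m:ℝ) - k := by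
        rw [Finset.sum_const, Nat.card_Icc]
        have : m + 1 - (k + 1) = m - k := by omega
        rw [this, nsmul_eq_mul, Nat.cast_sub hkm]
        ring
      have c4 : ∑ j ∈ Finset.Icc (k+1) m, ‖Dq τ f j‖^2 ≤ G := by
        apply Finset.sum_le_sum_of_subset_of_nonneg
        · intro j hj
          simp only [Finset.mem_Icc] at *
          omega
        · intro j _ _
          exact sq_nonneg _
      calc ∑ j ∈ Finset.Icc (k+1) m, ‖Dq τ f j‖
          = ∑ j ∈ Finset.Icc (k+1) m, 1 * ‖Dq τ f j‖ := c1
        _ ≤ Real.sqrt (∑ j ∈ Finset.Icc (k+1) m, (1:ℝ)^2)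
            * Real.sqrt (∑ j ∈ Finset.Icc (k+1) m, ‖Dq τ f j‖^2) := c2
        _ ≤ Real.sqrt ((m:ℝ) - k) * Real.sqrt G := by
            rw [c3]
            exact mul_le_mul_of_nonneg_left (Real.sqrt_le_sqrt c4) (Real.sqrt_nonneg _)
    calc ‖f m - f k‖ ≤ ∑ j ∈ Finset.Icc (k+1) m, ‖f j - f (j-1)‖ := t1
      _ = τ * ∑ j ∈ Finset.Icc (k+1) m, ‖Dq τ f j‖ := t2
      _ ≤ τ * (Real.sqrt ((m:ℝ) - k) * Real.sqrt G) :=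
          mul_le_mul_of_nonneg_left t3 hτ0.le
      _ = Real.sqrt τ * Real.sqrt ((m:ℝ) - k) * D := by
          rw [hDval]
          linear_combination (-(Real.sqrt ((m:ℝ) - k) * Real.sqrt G)) * hτs
  -- pointwise Poincaré
  have hpoint : ∀ m : ℕ, m ≤ M → ‖f m‖ ≤ Real.sqrt (T/2) * D := by
    intro m hm
    have hsum : ∑ k ∈ Finset.range (M+1), (f m - f k) = (M+1) • f m := by
      rw [Finset.sum_sub_distrib, hmean, sub_zero, Finset.sum_const, Finset.card_range]
    have hA : ((M:ℝ)+1) * ‖f m‖ ≤ ∑ k ∈ Finset.range (M+1), ‖f m - f k‖ := by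
      have h1 := norm_sum_le (Finset.range (M+1)) (fun k => f m - f k)
      rw [hsum, ← Nat.cast_smul_eq_nsmul ℝ, norm_smul, Real.norm_natCast] at h1
      push_cast at h1
      exact h1
    have hper : ∀ k ∈ Finset.range (M+1),
        ‖f m - f k‖ ≤ Real.sqrt τ * D * Real.sqrt (|(m:ℝ) - k|) := by
      intro k hk
      have hkM : k ≤ M := Nat.lt_succ_iff.mp (Finset.mem_range.mp hk)
      rcases le_total k m with h | h
      · have := htel k m h hm
        have e : |(m:ℝ) - k| = (m:ℝ) - k := by
          rw [abs_of_nonneg]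
          have : (k:ℝ) ≤ m := Nat.cast_le.mpr h
          linarith
        rw [e]; linarith [this]
      · rw [norm_sub_rev]
        have := htel m k h hkM
        have e : |(m:ℝ) - k| = (k:ℝ) - m := by
          rw [abs_of_nonpos]
          · ring
          · have : (m:ℝ) ≤ k := Nat.cast_le.mpr h
            linarith
        rw [e]; linarith [this]
    have hcs : ∑ k ∈ Finset.range (M+1), Real.sqrt (|(m:ℝ) - k|)
        ≤ Real.sqrt ((M:ℝ)*(M+1)/2) * Real.sqrt ((M:ℝ)+1) := by
      have c1 : ∀ k ∈ Finset.range (M+1),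
          Real.sqrt (|(m:ℝ) - k|) = Real.sqrt (|(m:ℝ) - k|) * Real.sqrt 1 := by
        intro k _; simp
      rw [Finset.sum_congr rfl c1]
      have c2 := Real.sum_sqrt_mul_sqrt_le (Finset.range (M+1))
        (f := fun k : ℕ => |(m:ℝ) - (k:ℝ)|) (g := fun _ : ℕ => (1:ℝ))
        (fun k => abs_nonneg _) (fun k => zero_le_one)
      have c3 : ∑ k ∈ Finset.range (M+1), (1:ℝ) = (M:ℝ) + 1 := by
        rw [Finset.sum_const, Finset.card_range, nsmul_eq_mul]; push_cast; ring
      rw [c3] at c2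
      calc _ ≤ Real.sqrt (∑ k ∈ Finset.range (M+1), |(m:ℝ) - k|) * Real.sqrt ((M:ℝ)+1) := c2
        _ ≤ Real.sqrt ((M:ℝ)*(M+1)/2) * Real.sqrt ((M:ℝ)+1) := by
            apply mul_le_mul_of_nonneg_right _ (Real.sqrt_nonneg _)
            apply Real.sqrt_le_sqrt
            exact_mod_cast abs_dist_sum M m hm
    have key : ((M:ℝ)+1) * ‖f m‖ ≤ ((M:ℝ)+1) * (Real.sqrt (T/2) * D) := by
      have step : ∑ k ∈ Finset.range (M+1), ‖f m - f k‖
          ≤ Real.sqrt τ * D * (Real.sqrt ((M:ℝ)*(M+1)/2) * Real.sqrt ((M:ℝ)+1)) := by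
        calc ∑ k ∈ Finset.range (M+1), ‖f m - f k‖
            ≤ ∑ k ∈ Finset.range (M+1), Real.sqrt τ * D * Real.sqrt (|(m:ℝ) - k|) :=
              Finset.sum_le_sum hper
          _ = Real.sqrt τ * D * ∑ k ∈ Finset.range (M+1), Real.sqrt (|(m:ℝ) - k|) := by
              rw [Finset.mul_sum]
          _ ≤ _ := by
              apply mul_le_mul_of_nonneg_left hcs
              positivity
      have egal : Real.sqrt τ * (Real.sqrt ((M:ℝ)*(M+1)/2) * Real.sqrt ((M:ℝ)+1))
          = Real.sqrt (T/2) * ((M:ℝ)+1) := by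
        have h1 : Real.sqrt (T/2) * ((M:ℝ)+1) = Real.sqrt ((T/2) * ((M:ℝ)+1)^2) := by
          rw [Real.sqrt_mul (by positivity), Real.sqrt_sq (by positivity)]
        rw [h1, ← Real.sqrt_mul (by positivity : (0:ℝ) ≤ (M:ℝ)*((M:ℝ)+1)/2),
          ← Real.sqrt_mul hτ0.le]
        congr 1
        rw [hTM]; ring
      calc ((M:ℝ)+1) * ‖f m‖ ≤ ∑ k ∈ Finset.range (M+1), ‖f m - f k‖ := hA
        _ ≤ Real.sqrt τ * D * (Real.sqrt ((M:ℝ)*(M+1)/2) * Real.sqrt ((M:ℝ)+1)) := step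
        _ = Real.sqrt τ * (Real.sqrt ((M:ℝ)*(M+1)/2) * Real.sqrt ((M:ℝ)+1)) * D := by ring
        _ = Real.sqrt (T/2) * ((M:ℝ)+1) * D := by rw [egal]
        _ = ((M:ℝ)+1) * (Real.sqrt (T/2) * D) := by ring
    exact le_of_mul_le_mul_left key (by positivity)
  -- trapezoidal norm facts
  set Nsq : ℝ := τ / 2 * ‖f 0‖^2 + τ * ∑ i ∈ Finset.Ico 1 M, ‖f i‖^2 + τ / 2 * ‖f M‖^2
    with hNsqdef
  have hNsq0 : 0 ≤ Nsq := by
    have : 0 ≤ ∑ i ∈ Finset.Ico 1 M, ‖f i‖^2 :=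
      Finset.sum_nonneg fun i _ => sq_nonneg _
    positivity
  have hNt0 : 0 ≤ Ntrap := by rw [hNtrap]; exact Real.sqrt_nonneg _
  have hNtsq : Ntrap ^ 2 = Nsq := by rw [hNtrap, Real.sq_sqrt hNsq0]
  -- squared pointwise bound
  have hfm2 : ∀ m : ℕ, m ≤ M → ‖f m‖^2 ≤ T/2 * D^2 := by
    intro m hm
    have h1 := hpoint m hm
    have h2 : (0:ℝ) ≤ ‖f m‖ := norm_nonneg _
    have h3 : Real.sqrt (T/2) ^ 2 = T/2 := Real.sq_sqrt (by positivity)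
    nlinarith [Real.sqrt_nonneg (T/2)]
  -- Poincaré for the trapezoidal norm
  have hNsq_le : Nsq ≤ T^2/2 * D^2 := by
    have h0 := hfm2 0 (Nat.zero_le M)
    have hMM := hfm2 M le_rfl
    have hmid : ∑ i ∈ Finset.Ico 1 M, ‖f i‖^2 ≤ ((M:ℝ)-1) * (T/2*D^2) := by
      calc ∑ i ∈ Finset.Ico 1 M, ‖f i‖^2
          ≤ ∑ _i ∈ Finset.Ico 1 M, (T/2*D^2) :=
            Finset.sum_le_sum fun i hi =>
              hfm2 i (le_of_lt (Finset.mem_Ico.mp hi).2)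
        _ = ((M:ℝ)-1) * (T/2*D^2) := by
            rw [Finset.sum_const, Nat.card_Ico, nsmul_eq_mul]
            rw [Nat.cast_sub hM]
            norm_num
    have e : τ/2 * (T/2*D^2) + τ * (((M:ℝ)-1) * (T/2*D^2)) + τ/2 * (T/2*D^2)
        = T^2/2 * D^2 := by rw [hTM]; ring
    have b1 : τ/2 * ‖f 0‖^2 ≤ τ/2 * (T/2*D^2) :=
      mul_le_mul_of_nonneg_left h0 (by positivity)
    have b2 : τ * ∑ i ∈ Finset.Ico 1 M, ‖f i‖^2 ≤ τ * (((M:ℝ)-1) * (T/2*D^2)) := by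
      exact mul_le_mul_of_nonneg_left hmid hτ0.le
    have b3 : τ/2 * ‖f M‖^2 ≤ τ/2 * (T/2*D^2) :=
      mul_le_mul_of_nonneg_left hMM (by positivity)
    rw [hNsqdef]
    linarith
  have hPoin : Ntrap ≤ Real.sqrt 2 / 2 * (T * D) := by
    have hs2 : Real.sqrt 2 ^ 2 = 2 := Real.sq_sqrt (by norm_num)
    have hle : Nsq ≤ (Real.sqrt 2 / 2 * (T * D))^2 := by nlinarith
    calc Ntrap = Real.sqrt Nsq := by rw [hNtrap]
      _ ≤ Real.sqrt ((Real.sqrt 2 / 2 * (T * D))^2) := Real.sqrt_le_sqrt hle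
      _ = Real.sqrt 2 / 2 * (T * D) := Real.sqrt_sq (by positivity)
  -- minimal element
  obtain ⟨k, hkmem, hkmin⟩ := Finset.exists_min_image (Finset.range (M+1))
    (fun k => ‖f k‖) ⟨0, by simp⟩
  have hkM : k ≤ M := Nat.lt_succ_iff.mp (Finset.mem_range.mp hkmem)
  have hb : ∀ j : ℕ, j ≤ M → ‖f k‖^2 ≤ ‖f j‖^2 := by
    intro j hj
    have := hkmin j (Finset.mem_range.mpr (Nat.lt_succ_iff.mpr hj))
    exact pow_le_pow_left₀ (norm_nonneg _) this 2
  have hmin : T * ‖f k‖^2 ≤ Nsq := by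
    have hmid : ((M:ℝ)-1) * ‖f k‖^2 ≤ ∑ i ∈ Finset.Ico 1 M, ‖f i‖^2 := by
      have h1 : ∑ _i ∈ Finset.Ico 1 M, ‖f k‖^2 ≤ ∑ i ∈ Finset.Ico 1 M, ‖f i‖^2 :=
        Finset.sum_le_sum fun i hi => hb i (le_of_lt (Finset.mem_Ico.mp hi).2)
      have h2 : ∑ _i ∈ Finset.Ico 1 M, ‖f k‖^2 = ((M:ℝ)-1) * ‖f k‖^2 := by
        rw [Finset.sum_const, Nat.card_Ico, nsmul_eq_mul, Nat.cast_sub hM]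
        norm_num
      linarith
    have h0 := hb 0 (Nat.zero_le M)
    have hMb := hb M le_rfl
    have b1 : τ/2 * ‖f k‖^2 ≤ τ/2 * ‖f 0‖^2 :=
      mul_le_mul_of_nonneg_left h0 (by positivity)
    have b2 : τ * (((M:ℝ)-1) * ‖f k‖^2) ≤ τ * ∑ i ∈ Finset.Ico 1 M, ‖f i‖^2 :=
      mul_le_mul_of_nonneg_left hmid hτ0.le
    have b3 : τ/2 * ‖f k‖^2 ≤ τ/2 * ‖f M‖^2 :=
      mul_le_mul_of_nonneg_left hMb (by positivity)
    have e : T * ‖f k‖^2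
        = τ/2 * ‖f k‖^2 + τ * (((M:ℝ)-1) * ‖f k‖^2) + τ/2 * ‖f k‖^2 := by
      rw [hTM]; ring
    rw [hNsqdef, e]
    linarith
  -- main oscillation bound
  set S : ℝ := ∑ j ∈ Finset.Icc 1 M, |‖f j‖^2 - ‖f (j-1)‖^2| with hSdef
  have habs : ∀ a b : ℕ, a ≤ M → b ≤ M → ‖f a‖^2 - ‖f b‖^2 ≤ S := by
    have key : ∀ a b : ℕ, b ≤ a → a ≤ M → |‖f a‖^2 - ‖f b‖^2| ≤ S := by
      intro a b hba haM
      have t := tele_norm' (fun j => ‖f j‖^2) b a hba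
      simp only [Real.norm_eq_abs] at t
      have hsub : Finset.Icc (b+1) a ⊆ Finset.Icc 1 M := by
        intro j hj
        simp only [Finset.mem_Icc] at *
        omega
      have hmono := Finset.sum_le_sum_of_subset_of_nonneg hsub
        (fun j _ _ => abs_nonneg (‖f j‖^2 - ‖f (j-1)‖^2))
      exact t.trans hmono
    intro a b ha hb
    rcases le_total b a with h | h
    · exact (le_abs_self _).trans (key a b h ha)
    · have := key b a h hb
      rw [abs_sub_comm] at this
      exact (le_abs_self _).trans this
  have hterm : ∀ j ∈ Finset.Icc 1 M,
      |‖f j‖^2 - ‖f (j-1)‖^2| ≤ τ * (‖Dq τ f j‖ * (‖f j‖ + ‖f (j-1)‖)) := by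
    intro j _
    have e : ‖f j‖^2 - ‖f (j-1)‖^2 = (‖f j‖ - ‖f (j-1)‖) * (‖f j‖ + ‖f (j-1)‖) := by
      ring
    rw [e, abs_mul, abs_of_nonneg (add_nonneg (norm_nonneg _) (norm_nonneg _))]
    have h1 : |‖f j‖ - ‖f (j-1)‖| ≤ ‖f j - f (j-1)‖ := abs_norm_sub_norm_le _ _
    have h2 := hdiff j
    calc |‖f j‖ - ‖f (j-1)‖| * (‖f j‖ + ‖f (j-1)‖)
        ≤ ‖f j - f (j-1)‖ * (‖f j‖ + ‖f (j-1)‖) :=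
          mul_le_mul_of_nonneg_right h1 (add_nonneg (norm_nonneg _) (norm_nonneg _))
      _ = τ * (‖Dq τ f j‖ * (‖f j‖ + ‖f (j-1)‖)) := by rw [h2]; ring
  have hq : ∑ j ∈ Finset.Icc 1 M, (‖f j‖ + ‖f (j-1)‖)^2 ≤ 4 * Nsq / τ := by
    have hpt : ∀ j ∈ Finset.Icc 1 M,
        (‖f j‖ + ‖f (j-1)‖)^2 ≤ 2*‖f j‖^2 + 2*‖f (j-1)‖^2 := by
      intro j _
      nlinarith [sq_nonneg (‖f j‖ - ‖f (j-1)‖)]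
    have e1 : ∑ j ∈ Finset.Icc 1 M, ‖f j‖^2
        = ∑ j ∈ Finset.Ico 1 M, ‖f j‖^2 + ‖f M‖^2 := by
      rw [← Finset.Ico_add_one_right_eq_Icc, Finset.sum_Ico_succ_top hM]
    have e2 : ∑ j ∈ Finset.Icc 1 M, ‖f (j-1)‖^2
        = ‖f 0‖^2 + ∑ j ∈ Finset.Ico 1 M, ‖f j‖^2 := by
      rw [← Finset.Ico_add_one_right_eq_Icc, Finset.sum_Ico_eq_sum_range]
      simp only [Nat.add_sub_cancel_left, Nat.add_sub_cancel, Nat.succ_sub_one]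
      rw [Finset.range_eq_Ico, Finset.sum_eq_sum_Ico_succ_bot hM]
    calc ∑ j ∈ Finset.Icc 1 M, (‖f j‖ + ‖f (j-1)‖)^2
        ≤ ∑ j ∈ Finset.Icc 1 M, (2*‖f j‖^2 + 2*‖f (j-1)‖^2) :=
          Finset.sum_le_sum hpt
      _ = 2 * (∑ j ∈ Finset.Icc 1 M, ‖f j‖^2)
          + 2 * (∑ j ∈ Finset.Icc 1 M, ‖f (j-1)‖^2) := by
          rw [Finset.sum_add_distrib, ← Finset.mul_sum, ← Finset.mul_sum]
      _ = 4 * Nsq / τ := by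
          rw [e1, e2, hNsqdef]
          field_simp
          ring
  have hS : S ≤ 2 * Ntrap * D := by
    have c1 : S ≤ ∑ j ∈ Finset.Icc 1 M, τ * (‖Dq τ f j‖ * (‖f j‖ + ‖f (j-1)‖)) :=
      Finset.sum_le_sum hterm
    have c2 : ∑ j ∈ Finset.Icc 1 M, τ * (‖Dq τ f j‖ * (‖f j‖ + ‖f (j-1)‖))
        = τ * ∑ j ∈ Finset.Icc 1 M, ‖Dq τ f j‖ * (‖f j‖ + ‖f (j-1)‖) := by
      rw [Finset.mul_sum]
    have c3 := Real.sum_mul_le_sqrt_mul_sqrt (Finset.Icc 1 M)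
      (fun j => ‖Dq τ f j‖) (fun j => ‖f j‖ + ‖f (j-1)‖)
    have c4 : Real.sqrt (∑ j ∈ Finset.Icc 1 M, (‖f j‖ + ‖f (j-1)‖)^2)
        ≤ Real.sqrt (4 * Nsq / τ) := Real.sqrt_le_sqrt hq
    have c5 : τ * (Real.sqrt G * Real.sqrt (4 * Nsq / τ)) = 2 * Ntrap * D := by
      have e : 4 * Nsq / τ = (2 * Real.sqrt Nsq / Real.sqrt τ)^2 := by
        rw [div_pow, mul_pow, Real.sq_sqrt hNsq0, Real.sq_sqrt hτ0.le]
        ring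
      rw [e, Real.sqrt_sq (by positivity), hNtrap, hDval]
      have hdiv : τ / Real.sqrt τ = Real.sqrt τ := Real.div_sqrt
      calc τ * (Real.sqrt G * (2 * Real.sqrt Nsq / Real.sqrt τ))
          = τ / Real.sqrt τ * (Real.sqrt G * (2 * Real.sqrt Nsq)) := by ring
        _ = 2 * Real.sqrt Nsq * (Real.sqrt τ * Real.sqrt G) := by rw [hdiv]; ring
    calc S ≤ τ * ∑ j ∈ Finset.Icc 1 M, ‖Dq τ f j‖ * (‖f j‖ + ‖f (j-1)‖) := by
          rw [← c2]; exact c1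
      _ ≤ τ * (Real.sqrt G * Real.sqrt (∑ j ∈ Finset.Icc 1 M, (‖f j‖ + ‖f (j-1)‖)^2)) :=
          mul_le_mul_of_nonneg_left c3 hτ0.le
      _ ≤ τ * (Real.sqrt G * Real.sqrt (4 * Nsq / τ)) := by
          apply mul_le_mul_of_nonneg_left _ hτ0.le
          exact mul_le_mul_of_nonneg_left c4 (Real.sqrt_nonneg _)
      _ = 2 * Ntrap * D := c5
  -- final assembly
  have hcA0 : 0 ≤ cA := Real.sqrt_nonneg _
  have hcA2 : cA^2 = 2 + Real.sqrt 2 / 2 := by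
    unfold cA
    exact Real.sq_sqrt (by positivity)
  have hkey : ‖f n‖^2 ≤ cA^2 * (Ntrap * D) := by
    have hB : ‖f n‖^2 ≤ ‖f k‖^2 + S := by linarith [habs n k hn hkM]
    have h1 : T * ‖f k‖^2 ≤ Ntrap^2 := by rw [hNtsq]; exact hmin
    have h2 : Ntrap^2 ≤ Real.sqrt 2 / 2 * (T * D) * Ntrap := by
      nlinarith [hNt0]
    have h3 : ‖f k‖^2 ≤ Real.sqrt 2 / 2 * (D * Ntrap) := by
      have h4 : T * ‖f k‖^2 ≤ T * (Real.sqrt 2 / 2 * (D * Ntrap)) := by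
        calc T * ‖f k‖^2 ≤ Real.sqrt 2 / 2 * (T * D) * Ntrap := h1.trans h2
          _ = T * (Real.sqrt 2 / 2 * (D * Ntrap)) := by ring
      exact le_of_mul_le_mul_left h4 hT
    rw [hcA2]
    nlinarith [hS, hB, h3]
  have hfinal := Real.sqrt_le_sqrt hkey
  rw [Real.sqrt_sq (norm_nonneg _)] at hfinal
  calc ‖f n‖ ≤ Real.sqrt (cA^2 * (Ntrap * D)) := hfinal
    _ = cA * Ntrap ^ ((1:ℝ)/2) * D ^ ((1:ℝ)/2) := by
        rw [Real.sqrt_mul (sq_nonneg cA), Real.sqrt_sq hcA0,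
          Real.sqrt_mul hNt0, ← Real.sqrt_eq_rpow, ← Real.sqrt_eq_rpow]
        ring
end

section
/- Let (f_n)_{n∈ℤ} be an M-periodic sequence in X. Then for every integer k with 1 ≤ k ≤ M−1, ‖D^k f‖_0 ≤ ‖D^{k−1} f‖_0^{1/2} · ‖D^{k+1} f‖_0^{1/2}. -/
/-- backward difference quotient of a bi-infinite sequence. -/
noncomputable def DqZ {X : Type*} [NormedAddCommGroup X] [NormedSpace ℝ X] (τ : ℝ) (f : ℤ → X) : ℤ → X :=
  fun n => τ⁻¹ • (f n - f (n - 1))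

/-- discrete `L²` norm `(τ Σ_{n=1}^{M} ‖f n‖²)^{1/2}` over one period. -/
noncomputable def seqNorm0Z {X : Type*} [NormedAddCommGroup X]
    (τ : ℝ) (M : ℕ) (f : ℤ → X) : ℝ :=
  Real.sqrt (τ * ∑ n ∈ Finset.Icc (1:ℤ) (M:ℤ), ‖f n‖^2)

open scoped RealInnerProductSpace

open Finset Function

section Periodic

variable {α : Type*} [AddCommGroup α]

lemma sum_Icc_sub_comp_sub_one (g : ℤ → α) (m : ℕ) :
    ∑ n ∈ Icc (1 : ℤ) m, (g n - g (n - 1)) = g m - g 0 := by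
  induction m with
  | zero => simp
  | succ m ih =>
    push_cast
    rw [← insert_Icc_right_eq_Icc_add_one (by omega), sum_insert (by simp), ih,
      add_sub_cancel_right]
    abel

lemma Function.Periodic.sum_Icc_comp_sub_one {g : ℤ → α} {M : ℕ} (hg : Periodic g M) :
    ∑ n ∈ Icc (1 : ℤ) M, g (n - 1) = ∑ n ∈ Icc (1 : ℤ) M, g n := by
  have h := sum_Icc_sub_comp_sub_one g M
  rw [sum_sub_distrib, hg.eq, sub_self] at h
  exact (sub_eq_zero.mp h).symm

end Periodic

section DifferenceQuotient

variable {X : Type*} [NormedAddCommGroup X] [InnerProductSpace ℝ X]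

lemma Function.Periodic.dqZ {f : ℤ → X} {c : ℤ} (hf : Periodic f c) (τ : ℝ) :
    Periodic (DqZ τ f) c :=
  (hf.sub (hf.sub_const 1)).smul τ⁻¹

lemma Function.Periodic.iterate_dqZ {f : ℤ → X} {c : ℤ} (hf : Periodic f c) (τ : ℝ) (k : ℕ) :
    Periodic ((DqZ τ)^[k] f) c := by
  induction k with
  | zero => exact hf
  | succ k ih => simpa only [iterate_succ_apply'] using ih.dqZ τ

lemma Function.Periodic.sum_inner_dqZ {u v : ℤ → X} {M : ℕ} (hu : Periodic u M)
    (hv : Periodic v M) (τ : ℝ) :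
    ∑ n ∈ Icc (1 : ℤ) M, ⟪DqZ τ u n, v n⟫ = -∑ n ∈ Icc (1 : ℤ) M, ⟪u (n - 1), DqZ τ v n⟫ := by
  have hshift : ∑ n ∈ Icc (1 : ℤ) M, ⟪u (n - 1), v (n - 1)⟫ = ∑ n ∈ Icc (1 : ℤ) M, ⟪u n, v n⟫ :=
    Periodic.sum_Icc_comp_sub_one (g := fun n => ⟪u n, v n⟫) fun n => by simp only [hu n, hv n]
  simp only [DqZ, real_inner_smul_left, real_inner_smul_right, inner_sub_left, inner_sub_right,
    ← mul_sum, sum_sub_distrib, hshift]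
  ring

lemma Function.Periodic.sum_norm_sq_dqZ_le {a : ℤ → X} {M : ℕ} (ha : Periodic a M) (τ : ℝ) :
    ∑ n ∈ Icc (1 : ℤ) M, ‖DqZ τ a n‖ ^ 2 ≤
      √(∑ n ∈ Icc (1 : ℤ) M, ‖a n‖ ^ 2) * √(∑ n ∈ Icc (1 : ℤ) M, ‖DqZ τ (DqZ τ a) n‖ ^ 2) := by
  have hshift : ∑ n ∈ Icc (1 : ℤ) M, ‖a (n - 1)‖ ^ 2 = ∑ n ∈ Icc (1 : ℤ) M, ‖a n‖ ^ 2 :=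
    Periodic.sum_Icc_comp_sub_one (g := fun n => ‖a n‖ ^ 2) fun n => by simp only [ha n]
  calc ∑ n ∈ Icc (1 : ℤ) M, ‖DqZ τ a n‖ ^ 2
      = -∑ n ∈ Icc (1 : ℤ) M, ⟪a (n - 1), DqZ τ (DqZ τ a) n⟫ := by
        simp only [← real_inner_self_eq_norm_sq, ha.sum_inner_dqZ (ha.dqZ τ)]
    _ ≤ ∑ n ∈ Icc (1 : ℤ) M, ‖a (n - 1)‖ * ‖DqZ τ (DqZ τ a) n‖ := by
        rw [← sum_neg_distrib]
        exact sum_le_sum fun n _ => (neg_le_abs _).trans (abs_real_inner_le_norm _ _)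
    _ ≤ _ := by
        rw [← hshift]
        exact Real.sum_mul_le_sqrt_mul_sqrt _ _ _

end DifferenceQuotient

lemma seqNorm0Z_eq_sqrt_mul_sqrt {X : Type*} [NormedAddCommGroup X] (τ : ℝ) (M : ℕ)
    (f : ℤ → X) : seqNorm0Z τ M f = √τ * √(∑ n ∈ Icc (1 : ℤ) M, ‖f n‖ ^ 2) :=
  Real.sqrt_mul' τ (sum_nonneg fun n _ => by positivity)

lemma mul_sqrt_le_rpow_half_mul_rpow_half {s x y B : ℝ} (hs : 0 ≤ s) (hx : 0 ≤ x) (hy : 0 ≤ y)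
    (h : B ≤ x * y) : s * √B ≤ (s * x) ^ ((1 : ℝ) / 2) * (s * y) ^ ((1 : ℝ) / 2) := by
  rw [← Real.mul_rpow (by positivity) (by positivity), ← Real.sqrt_eq_rpow,
    show s * x * (s * y) = s ^ 2 * (x * y) by ring, Real.sqrt_mul (by positivity), Real.sqrt_sq hs]
  gcongr

theorem periodic_interpolation_step_general
    {X : Type*} [NormedAddCommGroup X] [InnerProductSpace ℝ X]
    (M : ℕ) (τ : ℝ)
    (f : ℤ → X) (hper : ∀ n : ℤ, f (n + M) = f n)
    (k : ℕ) (hk : 1 ≤ k) :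
    seqNorm0Z τ M ((DqZ τ)^[k] f) ≤
      (seqNorm0Z τ M ((DqZ τ)^[k-1] f)) ^ ((1:ℝ)/2) *
      (seqNorm0Z τ M ((DqZ τ)^[k+1] f)) ^ ((1:ℝ)/2) := by
  obtain ⟨j, rfl⟩ : ∃ j, k = j + 1 := ⟨k - 1, by omega⟩
  have ha : Periodic ((DqZ τ)^[j] f) M := Periodic.iterate_dqZ hper τ j
  simp only [add_tsub_cancel_right, iterate_succ_apply', seqNorm0Z_eq_sqrt_mul_sqrt]
  exact mul_sqrt_le_rpow_half_mul_rpow_half (Real.sqrt_nonneg τ) (Real.sqrt_nonneg _)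
    (Real.sqrt_nonneg _) (ha.sum_norm_sq_dqZ_le τ)

/-- Lemma 4.2: discrete integration by parts for an M-periodic sequence:
`‖Dᵏf‖₀ ≤ ‖D^{k−1}f‖₀^{1/2} ‖D^{k+1}f‖₀^{1/2}` for `1 ≤ k ≤ M−1`. -/
theorem periodic_interpolation_step
    {X : Type*} [NormedAddCommGroup X] [InnerProductSpace ℝ X] [CompleteSpace X]
    (T : ℝ) (hT : 0 < T) (M : ℕ) (hM : 0 < M) (τ : ℝ) (hτ : τ = T / M)
    (f : ℤ → X) (hper : ∀ n : ℤ, f (n + M) = f n)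
    (k : ℕ) (hk : 1 ≤ k) (hkM : k + 1 ≤ M) :
    seqNorm0Z τ M ((DqZ τ)^[k] f) ≤
      (seqNorm0Z τ M ((DqZ τ)^[k-1] f)) ^ ((1:ℝ)/2) *
      (seqNorm0Z τ M ((DqZ τ)^[k+1] f)) ^ ((1:ℝ)/2) :=
  periodic_interpolation_step_general M τ f hper k hk
end

section
/- Let (f_n)_{n∈ℤ} be an M-periodic sequence in X. Then for every integer k with 1 ≤ k ≤ M−1, ‖D^k f‖_0 ≤ ‖f‖_0^{1/(k+1)} · ‖D^{k+1} f‖_0^{k/(k+1)}. -/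
open Finset in
/-- shift-by-one invariance of a periodic sum. -/
lemma sum_shift_one (M : ℕ) (hM : 0 < M) (g : ℤ → ℝ) (hg : ∀ n : ℤ, g (n + M) = g n) :
    ∑ n ∈ Finset.Icc (1:ℤ) M, g (n + 1) = ∑ n ∈ Finset.Icc (1:ℤ) M, g n := by
  have hM1 : (1:ℤ) ≤ M := by exact_mod_cast hM
  have e1 : Finset.Icc (1:ℤ) M = insert 1 (Finset.Icc (2:ℤ) (M:ℤ)) := by
    ext n; simp only [Finset.mem_Icc, Finset.mem_insert]; omega
  have e2 : Finset.Icc (2:ℤ) ((M:ℤ)+1) = insert ((M:ℤ)+1) (Finset.Icc (2:ℤ) (M:ℤ)) := by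
    ext n; simp only [Finset.mem_Icc, Finset.mem_insert]; omega
  have h1 : ∑ n ∈ Finset.Icc (1:ℤ) M, g (n + 1) = ∑ n ∈ Finset.Icc (2:ℤ) (M+1), g n := by
    have := Finset.sum_map (Finset.Icc (1:ℤ) M) (addLeftEmbedding 1) g
    rw [Finset.map_add_left_Icc] at this
    rw [show (2:ℤ) = 1 + 1 by ring, show (M:ℤ) + 1 = 1 + M by ring, this]
    exact Finset.sum_congr rfl (fun n _ => by rw [addLeftEmbedding_apply, add_comm])
  have hMg : g ((M:ℤ) + 1) = g 1 := by rw [add_comm]; exact hg 1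
  rw [h1, e2, Finset.sum_insert (by simp), hMg, e1,
    Finset.sum_insert (by simp)]

lemma DqZ_periodic {X : Type*} [NormedAddCommGroup X] [NormedSpace ℝ X]
    (τ : ℝ) (M : ℕ) (f : ℤ → X) (hper : ∀ n : ℤ, f (n + M) = f n) :
    ∀ n : ℤ, DqZ τ f (n + M) = DqZ τ f n := by
  intro n
  simp only [DqZ]
  rw [show n + (M:ℤ) - 1 = n - 1 + M by ring, hper, hper]

lemma DqZ_iter_periodic {X : Type*} [NormedAddCommGroup X] [NormedSpace ℝ X]
    (τ : ℝ) (M : ℕ) (f : ℤ → X) (hper : ∀ n : ℤ, f (n + M) = f n) (k : ℕ) :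
    ∀ n : ℤ, (DqZ τ)^[k] f (n + M) = (DqZ τ)^[k] f n := by
  induction k with
  | zero => simpa using hper
  | succ k ih =>
    intro n
    rw [Function.iterate_succ_apply']
    exact DqZ_periodic τ M _ ih n

open RealInnerProductSpace in
/-- Lemma 4.2: `‖Dg‖₀² ≤ ‖g‖₀ ‖D²g‖₀`. -/
lemma step_lemma {X : Type*} [NormedAddCommGroup X] [InnerProductSpace ℝ X]
    (τ : ℝ) (hτ : 0 < τ) (M : ℕ) (hM : 0 < M)
    (g : ℤ → X) (hper : ∀ n : ℤ, g (n + M) = g n) :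
    (seqNorm0Z τ M (DqZ τ g))^2 ≤ seqNorm0Z τ M g * seqNorm0Z τ M (DqZ τ (DqZ τ g)) := by
  set Dg := DqZ τ g with hDg
  set DDg := DqZ τ Dg with hDDg
  have hDper : ∀ n : ℤ, Dg (n + M) = Dg n := DqZ_periodic τ M g hper
  have hDDper : ∀ n : ℤ, DDg (n + M) = DDg n := DqZ_periodic τ M Dg hDper
  -- summation by parts
  have shift : ∑ n ∈ Finset.Icc (1:ℤ) M, ⟪g (n - 1), Dg n⟫ =
      ∑ n ∈ Finset.Icc (1:ℤ) M, ⟪g n, Dg (n + 1)⟫ := by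
    have := sum_shift_one M hM (fun n => ⟪g (n - 1), Dg n⟫)
      (fun n => by
        show ⟪g (n + (M:ℤ) - 1), Dg (n + M)⟫ = ⟪g (n - 1), Dg n⟫
        rw [show n + (M:ℤ) - 1 = n - 1 + (M:ℤ) by ring, hper, hDper])
    rw [← this]
    refine Finset.sum_congr rfl (fun n _ => ?_)
    show ⟪g (n + 1 - 1), Dg (n + 1)⟫ = ⟪g n, Dg (n + 1)⟫
    rw [show n + 1 - 1 = n by ring]
  have key : ∑ n ∈ Finset.Icc (1:ℤ) M, ‖Dg n‖^2 =
      ∑ n ∈ Finset.Icc (1:ℤ) M, (-⟪g n, DDg (n + 1)⟫) := by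
    have e1 : ∀ n : ℤ, ‖Dg n‖^2 = τ⁻¹ * (⟪g n, Dg n⟫ - ⟪g (n-1), Dg n⟫) := by
      intro n
      rw [← real_inner_self_eq_norm_sq]
      nth_rewrite 1 [hDg]
      simp only [DqZ, inner_smul_left, inner_sub_left]
      simp [RCLike.conj_to_real]
    have e2 : ∀ n : ℤ, -⟪g n, DDg (n + 1)⟫ = τ⁻¹ * (⟪g n, Dg n⟫ - ⟪g n, Dg (n+1)⟫) := by
      intro n
      rw [hDDg]
      simp only [DqZ, inner_smul_right, inner_sub_right]
      rw [show n + 1 - 1 = n by ring]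
      ring
    rw [Finset.sum_congr rfl (fun n _ => e1 n), Finset.sum_congr rfl (fun n _ => e2 n),
      ← Finset.mul_sum, ← Finset.mul_sum, Finset.sum_sub_distrib, Finset.sum_sub_distrib,
      shift]
  -- Cauchy-Schwarz
  have cs : ∑ n ∈ Finset.Icc (1:ℤ) M, (-⟪g n, DDg (n + 1)⟫) ≤
      Real.sqrt (∑ n ∈ Finset.Icc (1:ℤ) M, ‖g n‖^2) *
      Real.sqrt (∑ n ∈ Finset.Icc (1:ℤ) M, ‖DDg (n+1)‖^2) := by
    calc ∑ n ∈ Finset.Icc (1:ℤ) M, (-⟪g n, DDg (n + 1)⟫)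
        ≤ ∑ n ∈ Finset.Icc (1:ℤ) M, ‖g n‖ * ‖DDg (n+1)‖ := by
          apply Finset.sum_le_sum
          intro n _
          exact (neg_le_abs _).trans ((abs_real_inner_le_norm _ _))
      _ ≤ _ := Real.sum_mul_le_sqrt_mul_sqrt _ _ _
  have shift2 : ∑ n ∈ Finset.Icc (1:ℤ) M, ‖DDg (n+1)‖^2 =
      ∑ n ∈ Finset.Icc (1:ℤ) M, ‖DDg n‖^2 :=
    sum_shift_one M hM (fun n => ‖DDg n‖^2) (fun n => by
      show ‖DDg (n + M)‖^2 = ‖DDg n‖^2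
      rw [hDDper])
  -- assemble
  have hsq : (seqNorm0Z τ M Dg)^2 = τ * ∑ n ∈ Finset.Icc (1:ℤ) M, ‖Dg n‖^2 := by
    rw [seqNorm0Z, Real.sq_sqrt]
    positivity
  rw [hsq, key]
  calc τ * ∑ n ∈ Finset.Icc (1:ℤ) M, (-⟪g n, DDg (n + 1)⟫)
      ≤ τ * (Real.sqrt (∑ n ∈ Finset.Icc (1:ℤ) M, ‖g n‖^2) *
        Real.sqrt (∑ n ∈ Finset.Icc (1:ℤ) M, ‖DDg (n+1)‖^2)) := by
        exact mul_le_mul_of_nonneg_left cs hτ.le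
    _ = seqNorm0Z τ M g * seqNorm0Z τ M DDg := by
        rw [shift2, seqNorm0Z, seqNorm0Z, Real.sqrt_mul hτ.le, Real.sqrt_mul hτ.le]
        have : τ = Real.sqrt τ * Real.sqrt τ := (Real.mul_self_sqrt hτ.le).symm
        nth_rewrite 1 [this]
        ring

/-- Intermediate interpolation inequality (inside the proof of Lemma 4.3):
`‖Dᵏf‖₀ ≤ ‖f‖₀^{1/(k+1)} ‖D^{k+1}f‖₀^{k/(k+1)}` for an M-periodic sequence. -/
theorem periodic_interpolation_intermediate
    {X : Type*} [NormedAddCommGroup X] [InnerProductSpace ℝ X] [CompleteSpace X]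
    (T : ℝ) (hT : 0 < T) (M : ℕ) (hM : 0 < M) (τ : ℝ) (hτ : τ = T / M)
    (f : ℤ → X) (hper : ∀ n : ℤ, f (n + M) = f n)
    (k : ℕ) (hk : 1 ≤ k) (hkM : k + 1 ≤ M) :
    seqNorm0Z τ M ((DqZ τ)^[k] f) ≤
      (seqNorm0Z τ M f) ^ (1/((k:ℝ)+1)) *
      (seqNorm0Z τ M ((DqZ τ)^[k+1] f)) ^ ((k:ℝ)/((k:ℝ)+1)) := by
  have hτpos : 0 < τ := by rw [hτ]; positivity
  set a : ℕ → ℝ := fun j => seqNorm0Z τ M ((DqZ τ)^[j] f) with ha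
  have hanneg : ∀ j, 0 ≤ a j := fun j => Real.sqrt_nonneg _
  have hrec : ∀ j : ℕ, (a (j+1))^2 ≤ a j * a (j+2) := by
    intro j
    have := step_lemma τ hτpos M hM ((DqZ τ)^[j] f) (DqZ_iter_periodic τ M f hper j)
    simpa only [ha, ← Function.iterate_succ_apply'] using this
  -- induction: a k ^ (k+1) ≤ a 0 * a (k+1) ^ k
  have main : ∀ j : ℕ, 1 ≤ j → (a j)^(j+1) ≤ a 0 * (a (j+1))^j := by
    intro j hj
    induction j with
    | zero => omega
    | succ m ih =>
      rcases Nat.eq_or_lt_of_le hj with h1 | h1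
      · -- m = 0 case: a 1 ^ 2 ≤ a 0 * a 2
        have hm : m = 0 := by omega
        subst hm
        simpa using hrec 0
      · have hm : 1 ≤ m := by omega
        have ihm := ih hm
        by_cases hz : a (m+1) = 0
        · rw [hz]
          simp only [zero_pow (Nat.succ_ne_zero (m+1))]
          exact mul_nonneg (hanneg 0) (pow_nonneg (hanneg _) _)
        · have hpos : 0 < a (m+1) := lt_of_le_of_ne (hanneg _) (Ne.symm hz)
          have h2 : (a (m+1))^(2*(m+1)) ≤ (a m)^(m+1) * (a (m+2))^(m+1) := by
            calc (a (m+1))^(2*(m+1)) = ((a (m+1))^2)^(m+1) := by rw [← pow_mul]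
              _ ≤ (a m * a (m+2))^(m+1) :=
                  pow_le_pow_left₀ (sq_nonneg _) (hrec m) _
              _ = (a m)^(m+1) * (a (m+2))^(m+1) := mul_pow _ _ _
          have h3 : (a (m+1))^(2*(m+1)) ≤ (a 0 * (a (m+1))^m) * (a (m+2))^(m+1) :=
            h2.trans (mul_le_mul_of_nonneg_right ihm (pow_nonneg (hanneg _) _))
          -- divide by a(m+1)^m
          have h4 : (a (m+1))^(m+2) * (a (m+1))^m ≤
              (a 0 * (a (m+2))^(m+1)) * (a (m+1))^m := by
            calc (a (m+1))^(m+2) * (a (m+1))^m = (a (m+1))^(2*(m+1)) := by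
                  rw [← pow_add]; ring_nf
              _ ≤ (a 0 * (a (m+1))^m) * (a (m+2))^(m+1) := h3
              _ = (a 0 * (a (m+2))^(m+1)) * (a (m+1))^m := by ring
          exact le_of_mul_le_mul_right h4 (pow_pos hpos m)
  have hmain := main k hk
  -- convert to rpow
  have hk1 : (0:ℝ) < (k:ℝ) + 1 := by positivity
  have h5 : ((a k)^(k+1) : ℝ) ^ (1/((k:ℝ)+1)) ≤
      (a 0 * (a (k+1))^k) ^ (1/((k:ℝ)+1)) :=
    Real.rpow_le_rpow (pow_nonneg (hanneg _) _) hmain (by positivity)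
  have lhs : ((a k)^(k+1) : ℝ) ^ (1/((k:ℝ)+1)) = a k := by
    rw [← Real.rpow_natCast (a k) (k+1), ← Real.rpow_mul (hanneg k)]
    push_cast
    rw [mul_one_div, div_self hk1.ne', Real.rpow_one]
  have rhs : (a 0 * (a (k+1))^k) ^ (1/((k:ℝ)+1)) =
      (a 0) ^ (1/((k:ℝ)+1)) * (a (k+1)) ^ ((k:ℝ)/((k:ℝ)+1)) := by
    rw [Real.mul_rpow (hanneg 0) (pow_nonneg (hanneg _) _),
      ← Real.rpow_natCast (a (k+1)) k, ← Real.rpow_mul (hanneg (k+1)), mul_one_div]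
  rw [lhs, rhs] at h5
  simpa only [ha, Function.iterate_zero_apply] using h5
end

section
/- Let (f_n)_{n∈ℤ} be an M-periodic sequence in X. Then for every integer m with 2 ≤ m ≤ M, ‖D^1 f‖_0 ≤ ‖f‖_0^{(m−1)/m} · ‖D^m f‖_0^{1/m}. -/
open Finset in
lemma shift_sum (F : ℤ → ℝ) (M : ℕ) (hM : 0 < M) (hF : ∀ n : ℤ, F (n + M) = F n) :
    ∑ n ∈ Finset.Icc (1:ℤ) M, F (n+1) = ∑ n ∈ Finset.Icc (1:ℤ) M, F n := by
  have h0 : ∑ n ∈ Finset.Icc (1:ℤ) M, F (n+1) = ∑ n ∈ Finset.Icc (2:ℤ) (M+1), F n := by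
    apply Finset.sum_nbij' (fun n => n + 1) (fun n => n - 1) <;> intros <;>
      simp_all [Finset.mem_Icc] <;> omega
  have h1 : Finset.Icc (1:ℤ) (M+1) = insert ((M:ℤ)+1) (Finset.Icc (1:ℤ) M) := by
    ext x; simp [Finset.mem_Icc]; omega
  have h2 : Finset.Icc (1:ℤ) (M+1) = insert 1 (Finset.Icc (2:ℤ) (M+1)) := by
    ext x; simp [Finset.mem_Icc]; omega
  have hm1 : ((M:ℤ)+1) ∉ Finset.Icc (1:ℤ) M := by simp [Finset.mem_Icc]
  have hm2 : (1:ℤ) ∉ Finset.Icc (2:ℤ) (M+1) := by simp [Finset.mem_Icc]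
  have e1 : ∑ n ∈ Finset.Icc (1:ℤ) (M+1), F n = F (M+1) + ∑ n ∈ Finset.Icc (1:ℤ) M, F n := by
    rw [h1, Finset.sum_insert hm1]
  have e2 : ∑ n ∈ Finset.Icc (1:ℤ) (M+1), F n = F 1 + ∑ n ∈ Finset.Icc (2:ℤ) (M+1), F n := by
    rw [h2, Finset.sum_insert hm2]
  have : F ((M:ℤ)+1) = F 1 := by rw [add_comm]; exact hF 1
  rw [h0]; linarith [e1, e2]

open RealInnerProductSpace in
lemma key_ineq {X : Type*} [NormedAddCommGroup X] [InnerProductSpace ℝ X]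
    (τ : ℝ) (hτ : 0 < τ) (M : ℕ) (hM : 0 < M) (g : ℤ → X) (hg : ∀ n : ℤ, g (n + M) = g n) :
    seqNorm0Z τ M (DqZ τ g) ^ 2 ≤ seqNorm0Z τ M g * seqNorm0Z τ M (DqZ τ (DqZ τ g)) := by
  set h := DqZ τ g with hh
  set k := DqZ τ h with hk
  have hDper : ∀ (u : ℤ → X), (∀ n : ℤ, u (n + M) = u n) → ∀ n : ℤ, DqZ τ u (n + M) = DqZ τ u n := by
    intro u hu n
    simp only [DqZ]
    have : (n : ℤ) + M - 1 = (n - 1) + M := by ring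
    rw [this, hu, hu]
  have hhper : ∀ n : ℤ, h (n + M) = h n := hDper g hg
  have hkper : ∀ n : ℤ, k (n + M) = k n := hDper h hhper
  set S := Finset.Icc (1:ℤ) (M:ℤ) with hS
  -- summation by parts identity
  have e1 : ∀ n : ℤ, ‖h n‖^2 = τ⁻¹ * (⟪g n, h n⟫ - ⟪g (n-1), h n⟫) := by
    intro n
    rw [← real_inner_self_eq_norm_sq]
    nth_rewrite 1 [hh]
    simp only [DqZ, real_inner_smul_left, inner_sub_left]
  have shift1 : ∑ n ∈ S, ⟪g (n-1), h n⟫ = ∑ n ∈ S, ⟪g n, h (n+1)⟫ := by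
    have := shift_sum (fun n => ⟪g (n-1), h n⟫) M hM (by
      intro n
      have : (n : ℤ) + M - 1 = (n - 1) + M := by ring
      simp only [this, hg, hhper])
    rw [← this]
    apply Finset.sum_congr rfl
    intro n _
    simp
  have e2 : ∑ n ∈ S, ‖h n‖^2 = ∑ n ∈ S, ⟪g n, -(k (n+1))⟫ := by
    rw [Finset.sum_congr rfl (fun n _ => e1 n)]
    rw [← Finset.mul_sum, Finset.sum_sub_distrib, shift1, ← Finset.sum_sub_distrib,
      Finset.mul_sum]
    apply Finset.sum_congr rfl
    intro n _
    rw [← inner_sub_right]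
    have : -(k (n+1)) = τ⁻¹ • (h n - h (n+1)) := by
      rw [hk]; simp only [DqZ]
      have : (n : ℤ) + 1 - 1 = n := by ring
      rw [this, ← smul_neg, neg_sub]
    rw [this, real_inner_smul_right]
  -- Cauchy-Schwarz
  have e3 : ∑ n ∈ S, ‖h n‖^2 ≤ ∑ n ∈ S, ‖g n‖ * ‖k (n+1)‖ := by
    rw [e2]
    apply Finset.sum_le_sum
    intro n _
    calc ⟪g n, -(k (n+1))⟫ ≤ ‖g n‖ * ‖-(k (n+1))‖ := real_inner_le_norm _ _
      _ = ‖g n‖ * ‖k (n+1)‖ := by rw [norm_neg]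
  have e4 : ∑ n ∈ S, ‖g n‖ * ‖k (n+1)‖ ≤
      Real.sqrt (∑ n ∈ S, ‖g n‖^2) * Real.sqrt (∑ n ∈ S, ‖k (n+1)‖^2) :=
    Real.sum_mul_le_sqrt_mul_sqrt S _ _
  have shift2 : ∑ n ∈ S, ‖k (n+1)‖^2 = ∑ n ∈ S, ‖k n‖^2 :=
    shift_sum (fun n => ‖k n‖^2) M hM (fun n => by simp [hkper])
  have hsum_nonneg : ∀ (u : ℤ → X), (0:ℝ) ≤ ∑ n ∈ S, ‖u n‖^2 :=
    fun u => Finset.sum_nonneg fun n _ => sq_nonneg _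
  have main : ∑ n ∈ S, ‖h n‖^2 ≤
      Real.sqrt (∑ n ∈ S, ‖g n‖^2) * Real.sqrt (∑ n ∈ S, ‖k n‖^2) := by
    rw [← shift2]; exact e3.trans e4
  -- convert to seqNorm0Z
  have lhs_eq : seqNorm0Z τ M h ^ 2 = τ * ∑ n ∈ S, ‖h n‖^2 := by
    rw [seqNorm0Z, Real.sq_sqrt (by positivity)]
  have rhs_eq : seqNorm0Z τ M g * seqNorm0Z τ M k =
      τ * (Real.sqrt (∑ n ∈ S, ‖g n‖^2) * Real.sqrt (∑ n ∈ S, ‖k n‖^2)) := by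
    rw [seqNorm0Z, seqNorm0Z, Real.sqrt_mul hτ.le, Real.sqrt_mul hτ.le]
    have : Real.sqrt τ * Real.sqrt τ = τ := Real.mul_self_sqrt hτ.le
    rw [← hS, show Real.sqrt τ * Real.sqrt (∑ n ∈ S, ‖g n‖ ^ 2) * (Real.sqrt τ * Real.sqrt (∑ n ∈ S, ‖k n‖ ^ 2)) = (Real.sqrt τ * Real.sqrt τ) * (Real.sqrt (∑ n ∈ S, ‖g n‖ ^ 2) * Real.sqrt (∑ n ∈ S, ‖k n‖ ^ 2)) from by ring, this]
  rw [lhs_eq, rhs_eq]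
  exact mul_le_mul_of_nonneg_left main hτ.le

lemma ratio_lemma (a : ℕ → ℝ) (ha : ∀ k, 0 ≤ a k)
    (hconv : ∀ k, a (k+1)^2 ≤ a k * a (k+2)) :
    ∀ j, 1 ≤ j → a j * a 1 ≤ a 0 * a (j+1) := by
  intro j hj
  induction j with
  | zero => omega
  | succ i ih =>
    rcases Nat.eq_or_lt_of_le hj with h1 | h1
    · have : i = 0 := by omega
      subst this
      have := hconv 0
      nlinarith [this]
    · have hi : 1 ≤ i := by omega
      have IH := ih hi
      rcases eq_or_lt_of_le (ha (i+1)) with hz | hz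
      · rw [← hz]
        simp only [zero_mul]
        exact mul_nonneg (ha 0) (ha (i+2))
      · nlinarith [hconv i, IH, ha 1, ha (i+2), ha 0, mul_le_mul_of_nonneg_right IH (ha (i+2)),
          mul_le_mul_of_nonneg_right (hconv i) (ha 1)]

lemma pow_lemma (a : ℕ → ℝ) (ha : ∀ k, 0 ≤ a k)
    (hconv : ∀ k, a (k+1)^2 ≤ a k * a (k+2)) :
    ∀ j, 1 ≤ j → a 1 ^ j ≤ a 0 ^ (j-1) * a j := by
  intro j hj
  induction j with
  | zero => omega
  | succ i ih =>
    rcases Nat.eq_or_lt_of_le hj with h1 | h1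
    · have : i = 0 := by omega
      subst this; simp
    · have hi : 1 ≤ i := by omega
      have IH := ih hi
      have hr := ratio_lemma a ha hconv i hi
      calc a 1 ^ (i+1) = a 1 ^ i * a 1 := by rw [pow_succ]
        _ ≤ (a 0 ^ (i-1) * a i) * a 1 := mul_le_mul_of_nonneg_right IH (ha 1)
        _ = a 0 ^ (i-1) * (a i * a 1) := by ring
        _ ≤ a 0 ^ (i-1) * (a 0 * a (i+1)) :=
            mul_le_mul_of_nonneg_left hr (pow_nonneg (ha 0) _)
        _ = (a 0 ^ (i-1) * a 0) * a (i+1) := by ring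
        _ = a 0 ^ (i+1-1) * a (i+1) := by
            have h2 : i - 1 + 1 = i + 1 - 1 := by omega
            rw [← pow_succ, h2]

/-- Lemma 4.3: discrete Gagliardo–Nirenberg interpolation for M-periodic sequences:
`‖D¹f‖₀ ≤ ‖f‖₀^{(m−1)/m} ‖Dᵐf‖₀^{1/m}` for `2 ≤ m ≤ M`. -/
theorem periodic_interpolation
    {X : Type*} [NormedAddCommGroup X] [InnerProductSpace ℝ X] [CompleteSpace X]
    (T : ℝ) (hT : 0 < T) (M : ℕ) (hM : 0 < M) (τ : ℝ) (hτ : τ = T / M)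
    (f : ℤ → X) (hper : ∀ n : ℤ, f (n + M) = f n)
    (m : ℕ) (hm : 2 ≤ m) (hmM : m ≤ M) :
    seqNorm0Z τ M (DqZ τ f) ≤
      (seqNorm0Z τ M f) ^ (((m:ℝ)-1)/(m:ℝ)) *
      (seqNorm0Z τ M ((DqZ τ)^[m] f)) ^ (1/(m:ℝ)) := by
  have hτ0 : 0 < τ := by
    rw [hτ]; exact div_pos hT (by exact_mod_cast hM)
  set a : ℕ → ℝ := fun k => seqNorm0Z τ M ((DqZ τ)^[k] f) with ha_def
  have ha : ∀ k, 0 ≤ a k := fun k => Real.sqrt_nonneg _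
  have hiterper : ∀ k, ∀ n : ℤ, ((DqZ τ)^[k] f) (n + M) = ((DqZ τ)^[k] f) n := by
    intro k
    induction k with
    | zero => simpa using hper
    | succ i ih =>
      intro n
      rw [Function.iterate_succ_apply']
      simp only [DqZ]
      have : (n : ℤ) + M - 1 = (n - 1) + M := by ring
      rw [this, ih, ih]
  have hconv : ∀ k, a (k+1)^2 ≤ a k * a (k+2) := by
    intro k
    have h1 : (DqZ τ)^[k+1] f = DqZ τ ((DqZ τ)^[k] f) := Function.iterate_succ_apply' _ _ _
    have h2 : (DqZ τ)^[k+2] f = DqZ τ (DqZ τ ((DqZ τ)^[k] f)) := by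
      rw [Function.iterate_succ_apply', Function.iterate_succ_apply']
    simp only [ha_def, h1, h2]
    exact key_ineq τ hτ0 M hM _ (hiterper k)
  have hm1 : 1 ≤ m := by omega
  have hpow := pow_lemma a ha hconv m hm1
  -- goal restated: a 1 ≤ a 0 ^ (((m:ℝ)-1)/m) * a m ^ (1/(m:ℝ))
  have hgoal : a 1 ≤ a 0 ^ (((m:ℝ)-1)/(m:ℝ)) * a m ^ (1/(m:ℝ)) := by
    have hm0 : (m:ℝ) ≠ 0 := by positivity
    have hA := ha 0
    have hB := ha m
    have hC := ha 1
    calc a 1 = (a 1 ^ m) ^ (1/(m:ℝ)) := by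
          rw [← Real.rpow_natCast (a 1) m, ← Real.rpow_mul hC, mul_one_div, div_self hm0,
            Real.rpow_one]
      _ ≤ (a 0 ^ (m-1) * a m) ^ (1/(m:ℝ)) :=
          Real.rpow_le_rpow (by positivity) hpow (by positivity)
      _ = (a 0 ^ (m-1)) ^ (1/(m:ℝ)) * a m ^ (1/(m:ℝ)) :=
          Real.mul_rpow (pow_nonneg hA _) hB
      _ = a 0 ^ (((m:ℝ)-1)/(m:ℝ)) * a m ^ (1/(m:ℝ)) := by
          congr 1
          rw [← Real.rpow_natCast (a 0) (m-1), ← Real.rpow_mul hA]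
          congr 1
          have : ((m-1 : ℕ) : ℝ) = (m:ℝ) - 1 := by
            push_cast [Nat.cast_sub hm1]; ring
          rw [this, mul_one_div]
  have h1 : (DqZ τ)^[1] f = DqZ τ f := Function.iterate_one _ ▸ rfl
  simpa [ha_def, h1] using hgoal
end

section
/- Let f = (f_n)_{n=0}^M be a sequence in X, let k be an integer with 1 ≤ k ≤ M−1, and let m_k = (1/(M+1−k)) Σ_{n=k}^M D^k f_n be the mean of the k-th difference quotients. Then for every k ≤ n ≤ M, ‖D^k f_n − m_k‖ ≤ √2 · c_A · ‖D^k f‖_0^{1/2} · ‖D^{k+1} f‖_0^{1/2}, where c_A = √(2 + √2/2). -/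
noncomputable def cA1 : ℝ := (1 + (Real.sqrt 2 * cA) ^ ((4:ℝ)/3)) ^ ((3:ℝ)/4)
noncomputable def cB1 : ℝ := 2 * Real.sqrt (1 + 2 * (cA * cA1)^2)

/-- `dAux j = (d̂_j, ∏_{i≤j} d̂_i^{1/(i+1)})`, realizing the recursion (4.20). -/
noncomputable def dAux : ℕ → ℝ × ℝ
  | 0 => (cB1, cB1)
  | (j+1) =>
      let d : ℝ := (1 + (dAux j).1 ^ (2*((j:ℝ)+2))) ^ (((j:ℝ)+2) / (2*((j:ℝ)+1)*((j:ℝ)+3))) *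
                   ((dAux j).2) ^ (((j:ℝ)+2) / (((j:ℝ)+1)*((j:ℝ)+3)))
      (d, (dAux j).2 * d ^ (1/((j:ℝ)+2)))

noncomputable def dHat (j : ℕ) : ℝ := (dAux j).1

/-- `cAux j = (ĉ_j, ∏_{i≤j} ĉ_i^{1/(i+1)})`, realizing the recursion (4.19). -/
noncomputable def cAux : ℕ → ℝ × ℝ
  | 0 => (cB1 / Real.sqrt 2, cB1 / Real.sqrt 2)
  | (j+1) =>
      let c : ℝ := (1 + dHat j ^ (2*((j:ℝ)+2))) ^ (((j:ℝ)+2) / (2*((j:ℝ)+1)*((j:ℝ)+3))) *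
                   ((cAux j).2) ^ (((j:ℝ)+2) / (((j:ℝ)+1)*((j:ℝ)+3)))
      (c, (cAux j).2 * c ^ (1/((j:ℝ)+2)))

noncomputable def cHat (j : ℕ) : ℝ := (cAux j).1

/-- the constant `c_m = ∏_{j=0}^{m-2} ĉ_j^{1/(j+1)}` (equal to `1` for `m = 1`). -/
noncomputable def cConst (m : ℕ) : ℝ := ∏ j ∈ Finset.range (m-1), cHat j ^ (1/((j:ℝ)+1))

/-- `T_0 = T` and `T_j = (M+1−j)τ` for `j ≥ 1`. -/
noncomputable def Tk (τ T : ℝ) (M j : ℕ) : ℝ := if j = 0 then T else ((M:ℝ) + 1 - (j:ℝ)) * τ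

/-- the scale-invariant norm `‖Dᵏf‖_m = (Σ_{j=k}^{k+m} T_j^{−2(m+k−j)} ‖Dʲf‖₀²)^{1/2}`. -/
noncomputable def normm {X : Type*} [NormedAddCommGroup X] [NormedSpace ℝ X]
    (τ T : ℝ) (M k m : ℕ) (f : ℕ → X) : ℝ :=
  Real.sqrt (∑ j ∈ Finset.Icc k (k+m),
    (seqNorm0 τ j M ((Dq τ)^[j] f))^2 / (Tk τ T M j)^(2*(m+k-j)))

open Finset

theorem sum_Icc_succ_eq_sum_Ico {M : Type*} [AddCommMonoid M] (F : ℕ → M) (a b : ℕ) :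
    ∑ j ∈ Icc (a + 1) b, F j = ∑ i ∈ Ico a b, F (i + 1) := by
  rw [sum_Ico_add', Ico_add_one_right_eq_Icc]

theorem sum_Icc_succ_sub_pred {G : Type*} [AddCommGroup G] (v : ℕ → G) {a b : ℕ} (hab : a ≤ b) :
    ∑ j ∈ Icc (a + 1) b, (v j - v (j - 1)) = v b - v a := by
  rw [sum_Icc_succ_eq_sum_Ico]
  simpa only [Nat.add_sub_cancel] using sum_Ico_sub v hab

theorem sum_Icc_succ_pred_le {F : ℕ → ℝ} (hF : ∀ j, 0 ≤ F j) (a b : ℕ) :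
    ∑ j ∈ Icc (a + 1) b, F (j - 1) ≤ ∑ j ∈ Icc a b, F j := by
  rw [sum_Icc_succ_eq_sum_Ico]
  simp only [Nat.add_sub_cancel]
  exact sum_le_sum_of_subset_of_nonneg Ico_subset_Icc_self fun j _ _ => hF j

theorem abs_sub_le_sum_abs_sub_pred (F : ℕ → ℝ) {a b i n : ℕ} (hi : i ∈ Icc a b)
    (hn : n ∈ Icc a b) : |F n - F i| ≤ ∑ j ∈ Icc (a + 1) b, |F j - F (j - 1)| := by
  wlog hin : i ≤ n generalizing i n
  · rw [abs_sub_comm]; exact this hn hi (by omega)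
  rw [mem_Icc] at hi hn
  rw [← sum_Icc_succ_sub_pred F hin]
  refine (abs_sum_le_sum_abs _ _).trans ?_
  exact sum_le_sum_of_subset_of_nonneg (Icc_subset_Icc (by omega) hn.2)
    fun _ _ _ => abs_nonneg _

theorem norm_sum_sq_le_card_mul {ι F : Type*} [SeminormedAddCommGroup F] (s : Finset ι)
    (v : ι → F) : ‖∑ i ∈ s, v i‖ ^ 2 ≤ #s * ∑ i ∈ s, ‖v i‖ ^ 2 :=
  (pow_le_pow_left₀ (norm_nonneg _) (norm_sum_le _ _) 2).trans (sq_sum_le_card_mul_sum_sq ..)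

theorem abs_norm_sq_sub_norm_sq_le_s12 {F : Type*} [SeminormedAddCommGroup F] (p q : F) :
    |‖p‖ ^ 2 - ‖q‖ ^ 2| ≤ ‖p - q‖ * (‖p‖ + ‖q‖) := by
  rw [sq_sub_sq, abs_mul, abs_of_nonneg (by positivity : 0 ≤ ‖p‖ + ‖q‖), mul_comm]
  gcongr
  exact abs_norm_sub_norm_le p q

theorem sum_sub_inv_card_smul_sum_eq_zero {ι E : Type*} [AddCommGroup E] [Module ℝ E]
    {s : Finset ι} (hs : s.Nonempty) (g : ι → E) :
    ∑ i ∈ s, (g i - (#s : ℝ)⁻¹ • ∑ j ∈ s, g j) = 0 := by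
  rw [sum_sub_distrib, sum_const, ← Nat.cast_smul_eq_nsmul ℝ, smul_smul,
    mul_inv_cancel₀ (by exact_mod_cast hs.card_ne_zero), one_smul, sub_self]

section InnerProductSpace

variable {ι E : Type*} [NormedAddCommGroup E] [InnerProductSpace ℝ E]

theorem sum_norm_sub_sq_le_sum_norm_sq {s : Finset ι} {g : ι → E} {c : E}
    (hc : ∑ i ∈ s, (g i - c) = 0) : ∑ i ∈ s, ‖g i - c‖ ^ 2 ≤ ∑ i ∈ s, ‖g i‖ ^ 2 := by
  have hexpand (i : ι) : ‖g i‖ ^ 2 = ‖g i - c‖ ^ 2 + 2 * inner ℝ (g i - c) c + ‖c‖ ^ 2 := by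
    rw [← norm_add_sq_real, sub_add_cancel]
  simp only [hexpand, sum_add_distrib, ← mul_sum, ← sum_inner, hc, inner_zero_left, mul_zero,
    add_zero, sum_const, nsmul_eq_mul]
  exact le_add_of_nonneg_right (by positivity)

theorem sum_sum_norm_sub_sq_of_sum_eq_zero {s : Finset ι} {u : ι → E}
    (hu : ∑ i ∈ s, u i = 0) :
    ∑ i ∈ s, ∑ j ∈ s, ‖u i - u j‖ ^ 2 = 2 * #s * ∑ i ∈ s, ‖u i‖ ^ 2 := by
  simp only [norm_sub_sq_real, sum_add_distrib, sum_sub_distrib, ← mul_sum, ← inner_sum, hu,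
    inner_zero_right, mul_zero, sub_zero, sum_const, nsmul_eq_mul]
  ring

end InnerProductSpace

theorem seqNorm0_sq {X : Type*} [NormedAddCommGroup X] {τ : ℝ} (hτ : 0 ≤ τ) (a b : ℕ)
    (u : ℕ → X) : seqNorm0 τ a b u ^ 2 = τ * ∑ n ∈ Icc a b, ‖u n‖ ^ 2 :=
  Real.sq_sqrt (by positivity)

section DifferenceQuotient

variable {X : Type*} [NormedAddCommGroup X] [NormedSpace ℝ X]

theorem sub_pred_eq_smul_Dq {τ : ℝ} (hτ : τ ≠ 0) (u : ℕ → X) (j : ℕ) :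
    u j - u (j - 1) = τ • Dq τ u j := by
  rw [Dq, smul_smul, mul_inv_cancel₀ hτ, one_smul]

theorem Dq_sub_const (τ : ℝ) (u : ℕ → X) (c : X) : Dq τ (fun j => u j - c) = Dq τ u := by
  funext j
  simp only [Dq, sub_sub_sub_cancel_right]

variable {τ : ℝ} {a b : ℕ}

theorem norm_sub_sq_le_card_mul_seqNorm0_Dq_sq (hτ : 0 < τ) (u : ℕ → X) {i j : ℕ}
    (hi : i ∈ Icc a b) (hj : j ∈ Icc a b) :
    ‖u j - u i‖ ^ 2 ≤ #(Icc a b) * τ * seqNorm0 τ (a + 1) b (Dq τ u) ^ 2 := by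
  wlog hij : i ≤ j generalizing i j
  · rw [norm_sub_rev]; exact this hj hi (by omega)
  rw [mem_Icc] at hi hj
  have hsub : Icc (i + 1) j ⊆ Icc (a + 1) b := Icc_subset_Icc (by omega) hj.2
  have hincr : u j - u i = τ • ∑ l ∈ Icc (i + 1) j, Dq τ u l := by
    rw [smul_sum, ← sum_Icc_succ_sub_pred u hij]
    exact sum_congr rfl fun l _ => sub_pred_eq_smul_Dq hτ.ne' u l
  calc ‖u j - u i‖ ^ 2 = τ ^ 2 * ‖∑ l ∈ Icc (i + 1) j, Dq τ u l‖ ^ 2 := by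
        rw [hincr, norm_smul, Real.norm_of_nonneg hτ.le, mul_pow]
    _ ≤ τ ^ 2 * (#(Icc (i + 1) j) * ∑ l ∈ Icc (i + 1) j, ‖Dq τ u l‖ ^ 2) := by
        gcongr; exact norm_sum_sq_le_card_mul _ _
    _ ≤ τ ^ 2 * (#(Icc a b) * ∑ l ∈ Icc (a + 1) b, ‖Dq τ u l‖ ^ 2) := by
        have hcard : #(Icc (i + 1) j) ≤ #(Icc a b) :=
          card_le_card (hsub.trans (Icc_subset_Icc (by omega) le_rfl))
        gcongr
    _ = #(Icc a b) * τ * seqNorm0 τ (a + 1) b (Dq τ u) ^ 2 := by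
        rw [seqNorm0_sq hτ.le]; ring

theorem sum_norm_Dq_mul_le (u : ℕ → X) :
    ∑ j ∈ Icc (a + 1) b, ‖Dq τ u j‖ * (‖u j‖ + ‖u (j - 1)‖) ≤
      2 * √(∑ j ∈ Icc (a + 1) b, ‖Dq τ u j‖ ^ 2) * √(∑ j ∈ Icc a b, ‖u j‖ ^ 2) := by
  have hshift : ∑ j ∈ Icc (a + 1) b, ‖u j‖ ^ 2 ≤ ∑ j ∈ Icc a b, ‖u j‖ ^ 2 :=
    sum_le_sum_of_subset_of_nonneg (Icc_subset_Icc (by omega) le_rfl) fun _ _ _ => sq_nonneg _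
  have hpred : ∑ j ∈ Icc (a + 1) b, ‖u (j - 1)‖ ^ 2 ≤ ∑ j ∈ Icc a b, ‖u j‖ ^ 2 :=
    sum_Icc_succ_pred_le (F := (‖u ·‖ ^ 2)) (fun _ => sq_nonneg _) a b
  simp only [mul_add, sum_add_distrib]
  rw [two_mul, add_mul]
  gcongr ?_ + ?_
  · exact (Real.sum_mul_le_sqrt_mul_sqrt _ _ _).trans (by gcongr)
  · exact (Real.sum_mul_le_sqrt_mul_sqrt _ _ _).trans (by gcongr)

theorem norm_sq_le_norm_sq_add_two_mul_seqNorm0 (hτ : 0 < τ) (u : ℕ → X) {i n : ℕ}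
    (hi : i ∈ Icc a b) (hn : n ∈ Icc a b) :
    ‖u n‖ ^ 2 ≤ ‖u i‖ ^ 2 + 2 * (seqNorm0 τ a b u * seqNorm0 τ (a + 1) b (Dq τ u)) := by
  have hvar : ‖u n‖ ^ 2 - ‖u i‖ ^ 2 ≤
      τ * ∑ j ∈ Icc (a + 1) b, ‖Dq τ u j‖ * (‖u j‖ + ‖u (j - 1)‖) := by
    refine (le_abs_self _).trans ((abs_sub_le_sum_abs_sub_pred (‖u ·‖ ^ 2) hi hn).trans ?_)
    rw [mul_sum]
    refine sum_le_sum fun j _ => (abs_norm_sq_sub_norm_sq_le_s12 _ _).trans_eq ?_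
    rw [sub_pred_eq_smul_Dq hτ.ne' u j, norm_smul, Real.norm_of_nonneg hτ.le, mul_assoc]
  have hprod : seqNorm0 τ a b u * seqNorm0 τ (a + 1) b (Dq τ u) =
      τ * (√(∑ j ∈ Icc (a + 1) b, ‖Dq τ u j‖ ^ 2) * √(∑ j ∈ Icc a b, ‖u j‖ ^ 2)) := by
    simp only [seqNorm0, Real.sqrt_mul hτ.le]
    rw [mul_mul_mul_comm, Real.mul_self_sqrt hτ.le]
    ring
  have := mul_le_mul_of_nonneg_left (sum_norm_Dq_mul_le (a := a) (b := b) (τ := τ) u) hτ.le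
  rw [hprod]
  linarith

end DifferenceQuotient

section Agmon

variable {E : Type*} [NormedAddCommGroup E] [InnerProductSpace ℝ E] {τ : ℝ} {a b : ℕ}
  {u : ℕ → E}

theorem sqrt_two_mul_seqNorm0_le_of_sum_eq_zero (hτ : 0 < τ) (hu : ∑ j ∈ Icc a b, u j = 0) :
    √2 * seqNorm0 τ a b u ≤ #(Icc a b) * τ * seqNorm0 τ (a + 1) b (Dq τ u) := by
  set N : ℕ := #(Icc a b)
  set B := seqNorm0 τ (a + 1) b (Dq τ u)
  have hB : 0 ≤ B := Real.sqrt_nonneg _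
  rcases (Icc a b).eq_empty_or_nonempty with hempty | hne
  · simp only [seqNorm0, hempty, sum_empty, mul_zero, Real.sqrt_zero]
    positivity
  have hN : (0 : ℝ) < N := by exact_mod_cast hne.card_pos
  have hdouble : 2 * N * ∑ j ∈ Icc a b, ‖u j‖ ^ 2 ≤ N * N * (N * τ * B ^ 2) := by
    rw [← sum_sum_norm_sub_sq_of_sum_eq_zero hu]
    calc ∑ i ∈ Icc a b, ∑ j ∈ Icc a b, ‖u i - u j‖ ^ 2
        ≤ ∑ _i ∈ Icc a b, ∑ _j ∈ Icc a b, N * τ * B ^ 2 :=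
          sum_le_sum fun i hi => sum_le_sum fun j hj =>
            norm_sub_sq_le_card_mul_seqNorm0_Dq_sq hτ u hj hi
      _ = N * N * (N * τ * B ^ 2) := by simp only [sum_const, nsmul_eq_mul]; ring
  have hsq : (√2 * seqNorm0 τ a b u) ^ 2 ≤ (N * τ * B) ^ 2 := by
    rw [mul_pow, Real.sq_sqrt zero_le_two, seqNorm0_sq hτ.le]
    nlinarith
  exact (pow_le_pow_iff_left₀ (mul_nonneg (Real.sqrt_nonneg _) (Real.sqrt_nonneg _))
    (by positivity) two_ne_zero).mp hsq

theorem norm_sq_le_cA_sq_mul_seqNorm0_mul (hτ : 0 < τ) (hu : ∑ j ∈ Icc a b, u j = 0) {n : ℕ}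
    (hn : n ∈ Icc a b) :
    ‖u n‖ ^ 2 ≤ cA ^ 2 * (seqNorm0 τ a b u * seqNorm0 τ (a + 1) b (Dq τ u)) := by
  set A := seqNorm0 τ a b u
  set B := seqNorm0 τ (a + 1) b (Dq τ u)
  set N : ℕ := #(Icc a b)
  have hA : 0 ≤ A := Real.sqrt_nonneg _
  have hN : (0 : ℝ) < N := by exact_mod_cast card_pos.mpr ⟨n, hn⟩
  obtain ⟨i, hi, hsmall⟩ : ∃ i ∈ Icc a b, N * ‖u i‖ ^ 2 ≤ ∑ j ∈ Icc a b, ‖u j‖ ^ 2 :=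
    exists_le_of_sum_le ⟨n, hn⟩ (by rw [← mul_sum, sum_const, nsmul_eq_mul])
  have hmin : √2 * ‖u i‖ ^ 2 ≤ A * B := by
    have hpoinc := sqrt_two_mul_seqNorm0_le_of_sum_eq_zero hτ hu
    have hA2 : N * τ * ‖u i‖ ^ 2 ≤ A ^ 2 := by
      rw [seqNorm0_sq hτ.le]; nlinarith
    have : N * τ * (√2 * ‖u i‖ ^ 2) ≤ N * τ * (A * B) := by
      nlinarith [mul_le_mul_of_nonneg_right hpoinc hA, Real.sqrt_nonneg 2]
    exact le_of_mul_le_mul_left this (by positivity)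
  have hmin' : ‖u i‖ ^ 2 ≤ √2 / 2 * (A * B) := by
    nlinarith [Real.sq_sqrt (zero_le_two : (0 : ℝ) ≤ 2), Real.sqrt_nonneg 2]
  have hcA : cA ^ 2 = 2 + √2 / 2 := Real.sq_sqrt (by positivity)
  rw [hcA]
  linarith [norm_sq_le_norm_sq_add_two_mul_seqNorm0 hτ u hi hn]

theorem norm_le_cA_mul_sqrt_seqNorm0_mul_sqrt (hτ : 0 < τ) (hu : ∑ j ∈ Icc a b, u j = 0)
    {n : ℕ} (hn : n ∈ Icc a b) :
    ‖u n‖ ≤ cA * √(seqNorm0 τ a b u) * √(seqNorm0 τ (a + 1) b (Dq τ u)) := by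
  refine (pow_le_pow_iff_left₀ (norm_nonneg _) (by unfold cA; positivity) two_ne_zero).mp ?_
  have hA : 0 ≤ seqNorm0 τ a b u := Real.sqrt_nonneg _
  have hB : 0 ≤ seqNorm0 τ (a + 1) b (Dq τ u) := Real.sqrt_nonneg _
  rw [mul_pow, mul_pow, Real.sq_sqrt hA, Real.sq_sqrt hB, mul_assoc]
  exact norm_sq_le_cA_sq_mul_seqNorm0_mul hτ hu hn

end Agmon

theorem agmon_recentered_dq_general
    {X : Type*} [NormedAddCommGroup X] [InnerProductSpace ℝ X]
    (T : ℝ) (hT : 0 < T) (M : ℕ) (hM : 0 < M) (τ : ℝ) (hτ : τ = T / M)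
    (f : ℕ → X) (k : ℕ)
    (mk : X) (hmk : mk = ((M:ℝ) + 1 - (k:ℝ))⁻¹ • ∑ n ∈ Finset.Icc k M, (Dq τ)^[k] f n)
    (n : ℕ) (hnk : k ≤ n) (hnM : n ≤ M) :
    ‖(Dq τ)^[k] f n - mk‖ ≤
      Real.sqrt 2 * cA * (seqNorm0 τ k M ((Dq τ)^[k] f)) ^ ((1:ℝ)/2) *
        (seqNorm0 τ (k+1) M ((Dq τ)^[k+1] f)) ^ ((1:ℝ)/2) := by
  have hτ0 : 0 < τ := hτ ▸ by positivity
  have hn : n ∈ Icc k M := mem_Icc.mpr ⟨hnk, hnM⟩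
  set g := (Dq τ)^[k] f
  have hcard : (#(Icc k M) : ℝ) = (M : ℝ) + 1 - k := by
    rw [Nat.card_Icc, Nat.cast_sub (by omega)]; push_cast; ring
  have hmean : ∑ j ∈ Icc k M, (g j - mk) = 0 := by
    rw [hmk, ← hcard]; exact sum_sub_inv_card_smul_sum_eq_zero ⟨n, hn⟩ g
  have hagmon := norm_le_cA_mul_sqrt_seqNorm0_mul_sqrt hτ0 hmean hn
  rw [Dq_sub_const, ← Function.iterate_succ_apply' (Dq τ)] at hagmon
  have hvar : seqNorm0 τ k M (g · - mk) ≤ seqNorm0 τ k M g :=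
    Real.sqrt_le_sqrt (mul_le_mul_of_nonneg_left (sum_norm_sub_sq_le_sum_norm_sq hmean) hτ0.le)
  have hcA : 0 ≤ cA := Real.sqrt_nonneg _
  rw [← Real.sqrt_eq_rpow, ← Real.sqrt_eq_rpow, mul_assoc (√2), mul_assoc (√2)]
  calc ‖g n - mk‖
      ≤ cA * √(seqNorm0 τ k M (g · - mk)) * √(seqNorm0 τ (k + 1) M ((Dq τ)^[k + 1] f)) := hagmon
    _ ≤ cA * √(seqNorm0 τ k M g) * √(seqNorm0 τ (k + 1) M ((Dq τ)^[k + 1] f)) := by gcongr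
    _ ≤ √2 * (cA * √(seqNorm0 τ k M g) * √(seqNorm0 τ (k + 1) M ((Dq τ)^[k + 1] f))) :=
        le_mul_of_one_le_left (by positivity) (Real.one_le_sqrt.mpr one_le_two)

/-- Estimate (ag5): discrete Agmon inequality applied to the recentered
difference-quotient sequence `Dᵏf − m_k`. -/
theorem agmon_recentered_dq
    {X : Type*} [NormedAddCommGroup X] [InnerProductSpace ℝ X] [CompleteSpace X]
    (T : ℝ) (hT : 0 < T) (M : ℕ) (hM : 0 < M) (τ : ℝ) (hτ : τ = T / M)
    (f : ℕ → X) (k : ℕ) (hk : 1 ≤ k) (hkM : k + 1 ≤ M)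
    (mk : X) (hmk : mk = ((M:ℝ) + 1 - (k:ℝ))⁻¹ • ∑ n ∈ Finset.Icc k M, (Dq τ)^[k] f n)
    (n : ℕ) (hnk : k ≤ n) (hnM : n ≤ M) :
    ‖(Dq τ)^[k] f n - mk‖ ≤
      Real.sqrt 2 * cA * (seqNorm0 τ k M ((Dq τ)^[k] f)) ^ ((1:ℝ)/2) *
        (seqNorm0 τ (k+1) M ((Dq τ)^[k+1] f)) ^ ((1:ℝ)/2) :=
  agmon_recentered_dq_general T hT M hM τ hτ f k mk hmk n hnk hnM
end
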